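/- arXiv:nlin/0611055 — 16 statements merged into one kernel-verified Lean document; each statement's English description precedes it below -/
import Mathlib

section
/- Let α, β : ℤ × ℝ → ℂ be differentiable in t. For z ∈ ℂ∖{0} define the 2×2 complex matrices U(z,n,t) = [[z, α(n,t)], [β(n,t)z, 1]] and V(z,n,t) = i·[[z − 1 − α(n,t)β(n−1,t), α(n,t) − α(n−1,t)z⁻¹], [β(n−1,t)z − β(n,t), 1 + α(n−1,t)β(n,t) − z⁻¹]]. Then the zero-curvature equation ∂ₜU(z,n,t) + U(z,n,t)V(z,n,t) − V(z,n+1,t)U(z,n,t) = 0 holds for all z ∈ ℂ∖{0} and all (n,t) ∈ ℤ×ℝ if and only if (α,β) solves the Ablowitz–Ladik system −i∂ₜα − (1 − αβ)(α⁻ + α⁺) + 2α = 0 and −i∂ₜβ + (1 − αβ)(β⁻ + β⁺) − 2β = 0 on ℤ×ℝ. -/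
/-! The diagonal entries of `∂ₜU + U V - V⁺ U` cancel identically in `z`, while the off-diagonal
entries are `i` and `i z` times the two Ablowitz–Ladik equations. Hence the zero-curvature
equation for all `z ≠ 0` is equivalent to the system, already for the single value `z = 1`. -/

/-- The spatial zero-curvature matrix `U(z,n,t)` of the Ablowitz–Ladik system. -/
noncomputable def ALUmat (α β : ℤ → ℝ → ℂ) (z : ℂ) (n : ℤ) (t : ℝ) :
    Matrix (Fin 2) (Fin 2) ℂ :=
  !![z, α n t; β n t * z, 1]

/-- The temporal zero-curvature matrix `V(z,n,t)` of the Ablowitz–Ladik system. -/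
noncomputable def ALVmat (α β : ℤ → ℝ → ℂ) (z : ℂ) (n : ℤ) (t : ℝ) :
    Matrix (Fin 2) (Fin 2) ℂ :=
  Complex.I •
    !![z - 1 - α n t * β (n - 1) t, α n t - α (n - 1) t * z⁻¹;
       β (n - 1) t * z - β n t, 1 + α (n - 1) t * β n t - z⁻¹]

theorem Matrix.of_antidiag_eq_zero_iff {R : Type*} [Zero R] (a b : R) :
    !![0, a; b, 0] = 0 ↔ a = 0 ∧ b = 0 := by
  constructor
  · intro h
    exact ⟨congrFun (congrFun h 0) 1, congrFun (congrFun h 1) 0⟩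
  · rintro ⟨rfl, rfl⟩
    ext i j
    fin_cases i <;> fin_cases j <;> rfl

theorem zero_curvature_eq_of_ne_zero (α β αt βt : ℤ → ℝ → ℂ) {z : ℂ} (hz : z ≠ 0)
    (n : ℤ) (t : ℝ) :
    !![(0 : ℂ), αt n t; βt n t * z, 0]
        + ALUmat α β z n t * ALVmat α β z n t
        - ALVmat α β z (n + 1) t * ALUmat α β z n t
      = !![0, Complex.I * (-Complex.I * αt n t
            - (1 - α n t * β n t) * (α (n - 1) t + α (n + 1) t) + 2 * α n t);
          z * (Complex.I * (-Complex.I * βt n t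
            + (1 - α n t * β n t) * (β (n - 1) t + β (n + 1) t) - 2 * β n t)), 0] := by
  simp only [ALUmat, ALVmat, add_sub_cancel_right]
  ext i j
  fin_cases i <;> fin_cases j <;> simp <;> field_simp
  · ring
  · linear_combination (αt n t * z) * Complex.I_sq
  · linear_combination (βt n t * z) * Complex.I_sq
  · ring

theorem zero_curvature_iff_ablowitz_ladik_general (α β αt βt : ℤ → ℝ → ℂ) :
    (∀ z : ℂ, z ≠ 0 → ∀ (n : ℤ) (t : ℝ),
        !![(0 : ℂ), αt n t; βt n t * z, 0]
          + ALUmat α β z n t * ALVmat α β z n t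
          - ALVmat α β z (n + 1) t * ALUmat α β z n t = 0)
      ↔ (∀ (n : ℤ) (t : ℝ),
          -Complex.I * αt n t
            - (1 - α n t * β n t) * (α (n - 1) t + α (n + 1) t) + 2 * α n t = 0
          ∧ -Complex.I * βt n t
            + (1 - α n t * β n t) * (β (n - 1) t + β (n + 1) t) - 2 * β n t = 0) := by
  constructor
  · intro h n t
    have h₁ := h 1 one_ne_zero n t
    rw [zero_curvature_eq_of_ne_zero α β αt βt one_ne_zero,
      Matrix.of_antidiag_eq_zero_iff] at h₁
    simpa only [one_mul, mul_eq_zero, Complex.I_ne_zero, false_or] using h₁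
  · intro h z hz n t
    rw [zero_curvature_eq_of_ne_zero α β αt βt hz, Matrix.of_antidiag_eq_zero_iff,
      (h n t).1, (h n t).2, mul_zero, mul_zero]
    exact ⟨rfl, rfl⟩

/-- The zero-curvature equation `∂ₜU + U V - V⁺ U = 0` holds for all `z ≠ 0` and all
`(n,t) ∈ ℤ × ℝ` if and only if `(α, β)` solves the Ablowitz–Ladik system. -/
theorem zero_curvature_iff_ablowitz_ladik (α β αt βt : ℤ → ℝ → ℂ)
    (hα : ∀ (n : ℤ) (t : ℝ), HasDerivAt (α n) (αt n t) t)
    (hβ : ∀ (n : ℤ) (t : ℝ), HasDerivAt (β n) (βt n t) t) :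
    (∀ z : ℂ, z ≠ 0 → ∀ (n : ℤ) (t : ℝ),
        !![(0 : ℂ), αt n t; βt n t * z, 0]
          + ALUmat α β z n t * ALVmat α β z n t
          - ALVmat α β z (n + 1) t * ALUmat α β z n t = 0)
      ↔ (∀ (n : ℤ) (t : ℝ),
          -Complex.I * αt n t
            - (1 - α n t * β n t) * (α (n - 1) t + α (n + 1) t) + 2 * α n t = 0
          ∧ -Complex.I * βt n t
            + (1 - α n t * β n t) * (β (n - 1) t + β (n + 1) t) - 2 * β n t = 0) :=
  zero_curvature_iff_ablowitz_ladik_general α β αt βt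
end

section
/- Suppose the families f_{ℓ,±}, g_{ℓ,±}, h_{ℓ,±} satisfy the Ablowitz–Ladik recursion for (α, β). Then for every ℓ ∈ ℕ₀ and every n ∈ ℤ one has g_{ℓ,+} − g_{ℓ,+}⁻ = α h_{ℓ,+} + β f_{ℓ,+}⁻ and g_{ℓ,−} − g_{ℓ,−}⁻ = α h_{ℓ,−}⁻ + β f_{ℓ,−}. -/
/-- The `+`-half of the Ablowitz–Ladik recursion for `(α, β)` with constant `c0p`. -/
structure ALRecPlus (α β : ℤ → ℂ) (c0p : ℂ) (f g h : ℕ → ℤ → ℂ) : Prop where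
  g0 : ∀ n : ℤ, g 0 n = c0p / 2
  f0 : ∀ n : ℤ, f 0 n = -(c0p * α (n + 1))
  h0 : ∀ n : ℤ, h 0 n = c0p * β n
  g_step : ∀ (ℓ : ℕ) (n : ℤ),
    g (ℓ + 1) n - g (ℓ + 1) (n - 1) = α n * h ℓ (n - 1) + β n * f ℓ n
  f_step : ∀ (ℓ : ℕ) (n : ℤ),
    f (ℓ + 1) (n - 1) = f ℓ n - α n * (g (ℓ + 1) n + g (ℓ + 1) (n - 1))
  h_step : ∀ (ℓ : ℕ) (n : ℤ),
    h (ℓ + 1) n = h ℓ (n - 1) + β n * (g (ℓ + 1) n + g (ℓ + 1) (n - 1))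

/-- The `−`-half of the Ablowitz–Ladik recursion for `(α, β)` with constant `c0m`. -/
structure ALRecMinus (α β : ℤ → ℂ) (c0m : ℂ) (f g h : ℕ → ℤ → ℂ) : Prop where
  g0 : ∀ n : ℤ, g 0 n = c0m / 2
  f0 : ∀ n : ℤ, f 0 n = c0m * α n
  h0 : ∀ n : ℤ, h 0 n = -(c0m * β (n + 1))
  g_step : ∀ (ℓ : ℕ) (n : ℤ),
    g (ℓ + 1) n - g (ℓ + 1) (n - 1) = α n * h ℓ n + β n * f ℓ (n - 1)
  f_step : ∀ (ℓ : ℕ) (n : ℤ),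
    f (ℓ + 1) n = f ℓ (n - 1) + α n * (g (ℓ + 1) n + g (ℓ + 1) (n - 1))
  h_step : ∀ (ℓ : ℕ) (n : ℤ),
    h (ℓ + 1) (n - 1) = h ℓ n - β n * (g (ℓ + 1) n + g (ℓ + 1) (n - 1))

/-- The (full) Ablowitz–Ladik recursion for `(α, β)` with constants `c0p, c0m`:
the families `fp, gp, hp` satisfy the `+`-half and `fm, gm, hm` the `−`-half. -/
structure ALRecursion (α β : ℤ → ℂ) (c0p c0m : ℂ)
    (fp gp hp fm gm hm : ℕ → ℤ → ℂ) : Prop where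
  plus : ALRecPlus α β c0p fp gp hp
  minus : ALRecMinus α β c0m fm gm hm

/-- Additional identities \eqref{ALadd} satisfied by the Ablowitz–Ladik recursion
coefficients: `g_{ℓ,+} − g_{ℓ,+}⁻ = α h_{ℓ,+} + β f_{ℓ,+}⁻` and
`g_{ℓ,−} − g_{ℓ,−}⁻ = α h_{ℓ,−}⁻ + β f_{ℓ,−}`. -/
theorem ALRecursion.add_identities (α β : ℤ → ℂ) (c0p c0m : ℂ)
    (fp gp hp fm gm hm : ℕ → ℤ → ℂ)
    (h : ALRecursion α β c0p c0m fp gp hp fm gm hm) :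
    ∀ (ℓ : ℕ) (n : ℤ),
      gp ℓ n - gp ℓ (n - 1) = α n * hp ℓ n + β n * fp ℓ (n - 1)
      ∧ gm ℓ n - gm ℓ (n - 1) = α n * hm ℓ (n - 1) + β n * fm ℓ n := by
  intro ℓ n
  obtain ⟨hp', hm'⟩ := h
  cases ℓ with
  | zero =>
    constructor
    · rw [hp'.g0, hp'.g0, hp'.h0, hp'.f0, show n - 1 + 1 = n by ring]
      ring
    · rw [hm'.g0, hm'.g0, hm'.h0, hm'.f0, show n - 1 + 1 = n by ring]
      ring
  | succ ℓ =>
    constructor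
    · rw [hp'.g_step, hp'.h_step, hp'.f_step]
      ring
    · rw [hm'.g_step, hm'.h_step, hm'.f_step]
      ring
end

section
/- Suppose the families f_{ℓ,±}, g_{ℓ,±}, h_{ℓ,±} satisfy the Ablowitz–Ladik recursion for (α, β) with constants c₀,₊, c₀,₋. Then the families f'_{ℓ,−} := h_{ℓ,+}, g'_{ℓ,−} := g_{ℓ,+}, h'_{ℓ,−} := f_{ℓ,+} satisfy the '−'-half of the Ablowitz–Ladik recursion for the swapped pair (β, α) with constant c₀,₋' := c₀,₊, and the families f'_{ℓ,+} := h_{ℓ,−}, g'_{ℓ,+} := g_{ℓ,−}, h'_{ℓ,+} := f_{ℓ,−} satisfy the '+'-half of the Ablowitz–Ladik recursion for (β, α) with constant c₀,₊' := c₀,₋. In particular, the homogeneous coefficients obey the symmetries f̂_{ℓ,±}(α,β) = ĥ_{ℓ,∓}(β,α) and ĝ_{ℓ,±}(α,β) = ĝ_{ℓ,∓}(β,α). -/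
/-- Symmetry of the Ablowitz–Ladik recursion under interchanging `(α, β) ↦ (β, α)`:
if `(f_{·,±}, g_{·,±}, h_{·,±})` satisfy the Ablowitz–Ladik recursion for `(α, β)`
with constants `c0p, c0m`, then `(h_{·,+}, g_{·,+}, f_{·,+})` satisfy the `−`-half of
the recursion for `(β, α)` with constant `c₀,₋' = c0p`, and `(h_{·,−}, g_{·,−}, f_{·,−})`
satisfy the `+`-half of the recursion for `(β, α)` with constant `c₀,₊' = c0m`.
In particular, the homogeneous coefficients (obtained by taking `c0p = c0m = 1` and
all further summation constants zero) obey the symmetries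
`f̂_{ℓ,±}(α,β) = ĥ_{ℓ,∓}(β,α)` and `ĝ_{ℓ,±}(α,β) = ĝ_{ℓ,∓}(β,α)`. -/
theorem ALRecursion.swap_symmetry (α β : ℤ → ℂ) (c0p c0m : ℂ)
    (fp gp hp fm gm hm : ℕ → ℤ → ℂ)
    (h : ALRecursion α β c0p c0m fp gp hp fm gm hm) :
    ALRecMinus β α c0p hp gp fp ∧ ALRecPlus β α c0m hm gm fm := by
  obtain ⟨⟨pg0, pf0, ph0, pgs, pfs, phs⟩, ⟨mg0, mf0, mh0, mgs, mfs, mhs⟩⟩ := h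
  refine ⟨⟨pg0, ph0, pf0, ?_, phs, pfs⟩, ⟨mg0, mh0, mf0, ?_, mhs, mfs⟩⟩
  · intro ℓ n; rw [pgs ℓ n]; ring
  · intro ℓ n; rw [mgs ℓ n]; ring
end

section
/- Let α, β : ℤ → ℂ and let ρ : ℤ → ℂ satisfy ρ(n)² = 1 − α(n)β(n) for all n. Define the linear operator L on ℂ^ℤ by (Lf)(n) = [n even]·ρ(n−1)ρ(n)f(n−2) + ([n even]·β(n−1)ρ(n) − [n odd]·α(n+1)ρ(n))f(n−1) − β(n)α(n+1)f(n) + ([n even]·β(n)ρ(n+1) − [n odd]·α(n+2)ρ(n+1))f(n+1) + [n odd]·ρ(n+1)ρ(n+2)f(n+2), where [·] equals 1 if the parity condition holds and 0 otherwise, and let δ_m ∈ ℂ^ℤ be given by δ_m(n) = 1 if n = m and 0 otherwise. Define ĝ₀(n) := 1/2 and ĝ_ℓ(n) := (L^ℓ δ_n)(n) for ℓ ∈ ℕ; f̂_ℓ(n) := α(n)(L^{ℓ+1}δ_n)(n) + ρ(n)·((L^{ℓ+1}δ_n)(n−1) if n is even, (L^{ℓ+1}δ_{n−1})(n) if n is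 odd) for ℓ ∈ ℕ₀; ĥ_ℓ(n) := β(n)(L^ℓδ_n)(n) + ρ(n)·((L^ℓδ_{n−1})(n) if n is even, (L^ℓδ_n)(n−1) if n is odd) for ℓ ∈ ℕ₀. Then (f̂_ℓ, ĝ_ℓ, ĥ_ℓ)_{ℓ∈ℕ₀} satisfies the '+'-half of the Ablowitz–Ladik recursion for (α, β) with constant c₀,₊ = 1; in particular f̂₀ = −α⁺ and ĥ₀ = β. -/
/-- The indicator `[n even]`, as a complex number. -/
noncomputable def evenInd (n : ℤ) : ℂ := if Even n then 1 else 0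

/-- The indicator `[n odd]`, as a complex number. -/
noncomputable def oddInd (n : ℤ) : ℂ := if Even n then 0 else 1

/-- The Ablowitz–Ladik Lax difference operator `L` acting on `ℂ^ℤ`. -/
noncomputable def ALLax (α β ρ : ℤ → ℂ) (f : ℤ → ℂ) : ℤ → ℂ := fun n =>
  evenInd n * (ρ (n - 1) * ρ n) * f (n - 2)
    + (evenInd n * (β (n - 1) * ρ n) - oddInd n * (α (n + 1) * ρ n)) * f (n - 1)
    - β n * α (n + 1) * f n
    + (evenInd n * (β n * ρ (n + 1)) - oddInd n * (α (n + 2) * ρ (n + 1))) * f (n + 1)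
    + oddInd n * (ρ (n + 1) * ρ (n + 2)) * f (n + 2)

/-- The standard basis vector `δ_m ∈ ℂ^ℤ`. -/
noncomputable def deltaSeq (m : ℤ) : ℤ → ℂ := fun n => if n = m then 1 else 0

/-- `ĝ₀ = 1/2`, and `ĝ_ℓ(n) = (L^ℓ δ_n)(n)` for `ℓ ∈ ℕ`. -/
noncomputable def ghat (α β ρ : ℤ → ℂ) : ℕ → ℤ → ℂ
  | 0, _ => 1 / 2
  | ℓ + 1, n => (ALLax α β ρ)^[ℓ + 1] (deltaSeq n) n

/-- `f̂_ℓ(n) = α(n)(L^{ℓ+1}δ_n)(n) + ρ(n)·((L^{ℓ+1}δ_n)(n−1)` if `n` even,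
`(L^{ℓ+1}δ_{n−1})(n)` if `n` odd`)`. -/
noncomputable def fhat (α β ρ : ℤ → ℂ) (ℓ : ℕ) (n : ℤ) : ℂ :=
  α n * (ALLax α β ρ)^[ℓ + 1] (deltaSeq n) n
    + ρ n * (if Even n then (ALLax α β ρ)^[ℓ + 1] (deltaSeq n) (n - 1)
             else (ALLax α β ρ)^[ℓ + 1] (deltaSeq (n - 1)) n)

/-- `ĥ_ℓ(n) = β(n)(L^ℓδ_n)(n) + ρ(n)·((L^ℓδ_{n−1})(n)` if `n` even,
`(L^ℓδ_n)(n−1)` if `n` odd`)`. -/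
noncomputable def hhat (α β ρ : ℤ → ℂ) (ℓ : ℕ) (n : ℤ) : ℂ :=
  β n * (ALLax α β ρ)^[ℓ] (deltaSeq n) n
    + ρ n * (if Even n then (ALLax α β ρ)^[ℓ] (deltaSeq (n - 1)) n
             else (ALLax α β ρ)^[ℓ] (deltaSeq n) (n - 1))

namespace ALaux

variable (α β ρ : ℤ → ℂ)

noncomputable def q (a : ℕ) (i j : ℤ) : ℂ := (ALLax α β ρ)^[a] (deltaSeq j) i

lemma lax_sum {ι : Type} (s : Finset ι) (c : ι → ℂ) (v : ι → ℤ → ℂ) :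
    ALLax α β ρ (fun x => ∑ k ∈ s, c k * v k x) = fun n => ∑ k ∈ s, c k * ALLax α β ρ (v k) n := by
  funext n
  simp only [ALLax, Finset.mul_sum]
  rw [← Finset.sum_add_distrib, ← Finset.sum_sub_distrib, ← Finset.sum_add_distrib,
    ← Finset.sum_add_distrib]
  exact Finset.sum_congr rfl fun k _ => by ring

lemma iter_sum {ι : Type} (a : ℕ) (s : Finset ι) (c : ι → ℂ) (v : ι → ℤ → ℂ) :
    (ALLax α β ρ)^[a] (fun x => ∑ k ∈ s, c k * v k x)
      = fun n => ∑ k ∈ s, c k * (ALLax α β ρ)^[a] (v k) n := by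
  induction a with
  | zero => simp
  | succ a ih =>
    rw [Function.iterate_succ_apply', ih, lax_sum]
    funext n
    exact Finset.sum_congr rfl fun k _ => by rw [Function.iterate_succ_apply']

lemma q_succ (a : ℕ) (i j : ℤ) :
    q α β ρ (a+1) i j = ALLax α β ρ (fun x => q α β ρ a x j) i := by
  rw [q, Function.iterate_succ_apply']; rfl

lemma q_banded : ∀ (a : ℕ) (i j : ℤ), (j + 2*(a:ℤ) < i ∨ i + 2*(a:ℤ) < j) → q α β ρ a i j = 0 := by
  intro a
  induction a with
  | zero =>
    intro i j h
    simp only [q, Function.iterate_zero, id_eq, deltaSeq]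
    rw [if_neg (by omega)]
  | succ a ih =>
    intro i j h
    rw [q_succ]
    simp only [ALLax]
    rw [ih (i-2) j (by push_cast at h ⊢; omega), ih (i-1) j (by push_cast at h ⊢; omega),
      ih i j (by push_cast at h ⊢; omega), ih (i+1) j (by push_cast at h ⊢; omega),
      ih (i+2) j (by push_cast at h ⊢; omega)]
    ring

lemma delta_decomp (b : ℕ) (j : ℤ) :
    (ALLax α β ρ)^[b] (deltaSeq j)
      = fun x => ∑ k ∈ Finset.Icc (j - 2*(b:ℤ)) (j + 2*(b:ℤ)), q α β ρ b k j * deltaSeq k x := by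
  funext x
  simp only [deltaSeq, mul_ite, mul_one, mul_zero]
  have : ∀ k ∈ Finset.Icc (j - 2*(b:ℤ)) (j + 2*(b:ℤ)),
      (if x = k then q α β ρ b k j else 0) = if k = x then q α β ρ b k j else 0 := by
    intro k _; simp [eq_comm]
  rw [Finset.sum_congr rfl this, Finset.sum_ite_eq']
  by_cases hx : x ∈ Finset.Icc (j - 2*(b:ℤ)) (j + 2*(b:ℤ))
  · rw [if_pos hx]; rfl
  · rw [if_neg hx]
    rw [Finset.mem_Icc] at hx
    exact q_banded α β ρ b x j (by omega)

lemma q_mul (a b : ℕ) (i j : ℤ) :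
    q α β ρ (a+b) i j
      = ∑ k ∈ Finset.Icc (j - 2*(b:ℤ)) (j + 2*(b:ℤ)), q α β ρ b k j * q α β ρ a i k := by
  have h1 : q α β ρ (a+b) i j = (ALLax α β ρ)^[a] ((ALLax α β ρ)^[b] (deltaSeq j)) i := by
    rw [q, Function.iterate_add_apply]
  rw [h1, delta_decomp, iter_sum]
  rfl

lemma sum5 (j : ℤ) (f : ℤ → ℂ) :
    ∑ k ∈ Finset.Icc (j-2) (j+2), f k = f (j-2) + f (j-1) + f j + f (j+1) + f (j+2) := by
  have h : Finset.Icc (j-2) (j+2) = {j-2, j-1, j, j+1, j+2} := by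
    ext x; simp only [Finset.mem_Icc, Finset.mem_insert, Finset.mem_singleton]; omega
  rw [h, Finset.sum_insert (by simp only [Finset.mem_insert, Finset.mem_singleton]; omega), Finset.sum_insert (by simp only [Finset.mem_insert, Finset.mem_singleton]; omega),
    Finset.sum_insert (by simp only [Finset.mem_insert, Finset.mem_singleton]; omega), Finset.sum_insert (by simp only [Finset.mem_insert, Finset.mem_singleton]; omega),
    Finset.sum_singleton]
  ring

lemma q_mul' (a b : ℕ) (i j : ℤ) (S : Finset ℤ)
    (h : Finset.Icc (j - 2*(b:ℤ)) (j + 2*(b:ℤ)) ⊆ S) :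
    q α β ρ (a+b) i j = ∑ k ∈ S, q α β ρ b k j * q α β ρ a i k := by
  rw [q_mul]
  apply Finset.sum_subset h
  intro k _ hk2
  rw [q_banded α β ρ b k j (by simp only [Finset.mem_Icc] at hk2; omega), zero_mul]

noncomputable def chi (n k : ℤ) : ℂ := if n ≤ k then 1 else 0

noncomputable def FF (a b : ℕ) (S : Finset ℤ) (n : ℤ) : ℂ :=
  ∑ j ∈ S, ∑ k ∈ S, (chi n k - chi n j) * q α β ρ a j k * q α β ρ b k j

lemma key_vanish (a : ℕ) (n j k : ℤ) (X : ℂ)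
    (h : j ∉ Finset.Icc (n - 2*(a:ℤ)) (n + 2*(a:ℤ)) ∨ k ∉ Finset.Icc (n - 2*(a:ℤ)) (n + 2*(a:ℤ))) :
    (chi n k - chi n j) * q α β ρ a j k * X = 0 := by
  simp only [Finset.mem_Icc, not_and, not_le] at h
  by_cases hk : n ≤ k <;> by_cases hj : n ≤ j
  · simp [chi, hk, hj]
  · rw [q_banded α β ρ a j k (by omega)]; ring
  · rw [q_banded α β ρ a j k (by omega)]; ring
  · simp [chi, hk, hj]

lemma FF_shrink (a b : ℕ) (n : ℤ) (S : Finset ℤ)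
    (hS : Finset.Icc (n - 2*(a:ℤ)) (n + 2*(a:ℤ)) ⊆ S) :
    FF α β ρ a b S n = FF α β ρ a b (Finset.Icc (n - 2*(a:ℤ)) (n + 2*(a:ℤ))) n := by
  unfold FF
  have inner : ∀ j : ℤ, ∑ k ∈ S, (chi n k - chi n j) * q α β ρ a j k * q α β ρ b k j
      = ∑ k ∈ Finset.Icc (n - 2*(a:ℤ)) (n + 2*(a:ℤ)),
          (chi n k - chi n j) * q α β ρ a j k * q α β ρ b k j := by
    intro j
    exact (Finset.sum_subset hS (fun k _ hk => key_vanish α β ρ a n j k _ (Or.inr hk))).symm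
  rw [Finset.sum_congr rfl fun j _ => inner j]
  exact (Finset.sum_subset hS (fun j _ hj =>
    Finset.sum_eq_zero fun k _ => key_vanish α β ρ a n j k _ (Or.inl hj))).symm

lemma FF_congr (a b : ℕ) (n : ℤ) (S S' : Finset ℤ)
    (hS : Finset.Icc (n - 2*(a:ℤ)) (n + 2*(a:ℤ)) ⊆ S)
    (hS' : Finset.Icc (n - 2*(a:ℤ)) (n + 2*(a:ℤ)) ⊆ S') :
    FF α β ρ a b S n = FF α β ρ a b S' n :=
  (FF_shrink α β ρ a b n S hS).trans (FF_shrink α β ρ a b n S' hS').symm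

noncomputable def Fl (a b : ℕ) (n : ℤ) : ℂ :=
  FF α β ρ a b (Finset.Icc (n - (2*(a:ℤ)+2*(b:ℤ)+1)) (n + (2*(a:ℤ)+2*(b:ℤ)+1))) n

lemma Fl_antisymm (a b : ℕ) (n : ℤ) : Fl α β ρ a b n = - Fl α β ρ b a n := by
  unfold Fl
  rw [FF_congr α β ρ b a n _ (Finset.Icc (n - (2*(a:ℤ)+2*(b:ℤ)+1)) (n + (2*(a:ℤ)+2*(b:ℤ)+1)))
    (by intro x; simp only [Finset.mem_Icc]; omega) (by intro x; simp only [Finset.mem_Icc]; omega)]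
  set S := Finset.Icc (n - (2*(a:ℤ)+2*(b:ℤ)+1)) (n + (2*(a:ℤ)+2*(b:ℤ)+1))
  unfold FF
  rw [eq_neg_iff_add_eq_zero]
  have hcomm : ∑ j ∈ S, ∑ k ∈ S, (chi n k - chi n j) * q α β ρ b j k * q α β ρ a k j
      = ∑ j ∈ S, ∑ k ∈ S, (chi n j - chi n k) * q α β ρ b k j * q α β ρ a j k :=
    Finset.sum_comm
  rw [hcomm, ← Finset.sum_add_distrib]
  apply Finset.sum_eq_zero
  intro j _
  rw [← Finset.sum_add_distrib]
  exact Finset.sum_eq_zero fun k _ => by ring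

lemma Fl_zero_left (b : ℕ) (n : ℤ) : Fl α β ρ 0 b n = 0 := by
  unfold Fl FF
  apply Finset.sum_eq_zero; intro j _
  apply Finset.sum_eq_zero; intro k _
  by_cases h : j = k
  · subst h; rw [sub_self, zero_mul, zero_mul]
  · have h0 : q α β ρ 0 j k = 0 := by
      simp only [q, Function.iterate_zero, id_eq, deltaSeq]
      rw [if_neg h]
    rw [h0]; ring

lemma sum_cycle (U : Finset ℤ) (f : ℤ → ℤ → ℤ → ℂ) :
    (∑ x ∈ U, ∑ y ∈ U, ∑ z ∈ U, f x y z) = ∑ x ∈ U, ∑ y ∈ U, ∑ z ∈ U, f z x y := by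
  rw [Finset.sum_comm]
  exact Finset.sum_congr rfl fun x _ => Finset.sum_comm

lemma Fl_cocycle (a b c : ℕ) (n : ℤ) :
    Fl α β ρ a (b+c) n + Fl α β ρ b (c+a) n + Fl α β ρ c (a+b) n = 0 := by
  set s : ℤ := 2*(a:ℤ)+2*(b:ℤ)+2*(c:ℤ) with hs
  set T : Finset ℤ := Finset.Icc (n - (s+1)) (n + (s+1)) with hT
  set U : Finset ℤ := Finset.Icc (n - (2*s+1)) (n + (2*s+1)) with hU
  have hTU : T ⊆ U := by
    intro x hx; simp only [hT, hU, Finset.mem_Icc] at *; omega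
  have e1 : Fl α β ρ a (b+c) n = FF α β ρ a (b+c) T n := by
    unfold Fl
    congr 2 <;> push_cast <;> ring
  have e2 : Fl α β ρ b (c+a) n = FF α β ρ b (c+a) T n := by
    unfold Fl
    congr 2 <;> push_cast <;> ring
  have e3 : Fl α β ρ c (a+b) n = FF α β ρ c (a+b) T n := by
    unfold Fl
    congr 2 <;> push_cast <;> ring
  have h1 : FF α β ρ a (b+c) T n
      = ∑ j ∈ U, ∑ k ∈ U, ∑ m ∈ U,
          (chi n k - chi n j) * q α β ρ a j k * (q α β ρ c m j * q α β ρ b k m) := by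
    unfold FF
    have step1 : ∀ j ∈ T, ∀ k ∈ T,
        (chi n k - chi n j) * q α β ρ a j k * q α β ρ (b+c) k j
          = ∑ m ∈ U, (chi n k - chi n j) * q α β ρ a j k * (q α β ρ c m j * q α β ρ b k m) := by
      intro j hj k _
      rw [q_mul' α β ρ b c k j U (by
        intro x hx
        simp only [hT, Finset.mem_Icc] at hj
        simp only [Finset.mem_Icc] at hx
        simp only [hU, Finset.mem_Icc]; omega), Finset.mul_sum]
    rw [Finset.sum_congr rfl fun j hj => Finset.sum_congr rfl fun k hk => step1 j hj k hk]
    rw [Finset.sum_congr rfl fun j (hj : j ∈ T) => Finset.sum_subset hTU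
      (fun k _ hkT => Finset.sum_eq_zero fun m _ => key_vanish α β ρ a n j k _
        (Or.inr (fun hc => hkT (by
          simp only [Finset.mem_Icc] at hc; simp only [hT, Finset.mem_Icc]; omega))))]
    exact Finset.sum_subset hTU (fun j _ hjT => Finset.sum_eq_zero fun k _ =>
      Finset.sum_eq_zero fun m _ => key_vanish α β ρ a n j k _
        (Or.inl (fun hc => hjT (by
          simp only [Finset.mem_Icc] at hc; simp only [hT, Finset.mem_Icc]; omega))))
  have h2 : FF α β ρ b (c+a) T n
      = ∑ j ∈ U, ∑ k ∈ U, ∑ m ∈ U,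
          (chi n k - chi n j) * q α β ρ b j k * (q α β ρ a m j * q α β ρ c k m) := by
    unfold FF
    have step1 : ∀ j ∈ T, ∀ k ∈ T,
        (chi n k - chi n j) * q α β ρ b j k * q α β ρ (c+a) k j
          = ∑ m ∈ U, (chi n k - chi n j) * q α β ρ b j k * (q α β ρ a m j * q α β ρ c k m) := by
      intro j hj k _
      rw [q_mul' α β ρ c a k j U (by
        intro x hx
        simp only [hT, Finset.mem_Icc] at hj
        simp only [Finset.mem_Icc] at hx
        simp only [hU, Finset.mem_Icc]; omega), Finset.mul_sum]
    rw [Finset.sum_congr rfl fun j hj => Finset.sum_congr rfl fun k hk => step1 j hj k hk]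
    rw [Finset.sum_congr rfl fun j (hj : j ∈ T) => Finset.sum_subset hTU
      (fun k _ hkT => Finset.sum_eq_zero fun m _ => key_vanish α β ρ b n j k _
        (Or.inr (fun hc => hkT (by
          simp only [Finset.mem_Icc] at hc; simp only [hT, Finset.mem_Icc]; omega))))]
    exact Finset.sum_subset hTU (fun j _ hjT => Finset.sum_eq_zero fun k _ =>
      Finset.sum_eq_zero fun m _ => key_vanish α β ρ b n j k _
        (Or.inl (fun hc => hjT (by
          simp only [Finset.mem_Icc] at hc; simp only [hT, Finset.mem_Icc]; omega))))
  have h3 : FF α β ρ c (a+b) T n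
      = ∑ j ∈ U, ∑ k ∈ U, ∑ m ∈ U,
          (chi n k - chi n j) * q α β ρ c j k * (q α β ρ b m j * q α β ρ a k m) := by
    unfold FF
    have step1 : ∀ j ∈ T, ∀ k ∈ T,
        (chi n k - chi n j) * q α β ρ c j k * q α β ρ (a+b) k j
          = ∑ m ∈ U, (chi n k - chi n j) * q α β ρ c j k * (q α β ρ b m j * q α β ρ a k m) := by
      intro j hj k _
      rw [q_mul' α β ρ a b k j U (by
        intro x hx
        simp only [hT, Finset.mem_Icc] at hj
        simp only [Finset.mem_Icc] at hx
        simp only [hU, Finset.mem_Icc]; omega), Finset.mul_sum]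
    rw [Finset.sum_congr rfl fun j hj => Finset.sum_congr rfl fun k hk => step1 j hj k hk]
    rw [Finset.sum_congr rfl fun j (hj : j ∈ T) => Finset.sum_subset hTU
      (fun k _ hkT => Finset.sum_eq_zero fun m _ => key_vanish α β ρ c n j k _
        (Or.inr (fun hc => hkT (by
          simp only [Finset.mem_Icc] at hc; simp only [hT, Finset.mem_Icc]; omega))))]
    exact Finset.sum_subset hTU (fun j _ hjT => Finset.sum_eq_zero fun k _ =>
      Finset.sum_eq_zero fun m _ => key_vanish α β ρ c n j k _
        (Or.inl (fun hc => hjT (by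
          simp only [Finset.mem_Icc] at hc; simp only [hT, Finset.mem_Icc]; omega))))
  rw [e1, e2, e3, h1, h2, h3]
  have key : ∀ f : ℤ → ℤ → ℤ → ℂ,
      (∑ x ∈ U, ∑ y ∈ U, ∑ z ∈ U, f x y z) = ∑ x ∈ U, ∑ y ∈ U, ∑ z ∈ U, f y z x := by
    intro f
    exact (sum_cycle U f).trans (sum_cycle U fun x y z => f z x y)
  rw [key (fun j k m => (chi n k - chi n j) * q α β ρ b j k * (q α β ρ a m j * q α β ρ c k m))]
  rw [sum_cycle U (fun j k m => (chi n k - chi n j) * q α β ρ c j k * (q α β ρ b m j * q α β ρ a k m))]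
  rw [← Finset.sum_add_distrib, ← Finset.sum_add_distrib]
  apply Finset.sum_eq_zero; intro x _
  rw [← Finset.sum_add_distrib, ← Finset.sum_add_distrib]
  apply Finset.sum_eq_zero; intro y _
  rw [← Finset.sum_add_distrib, ← Finset.sum_add_distrib]
  apply Finset.sum_eq_zero; intro z _
  ring

lemma Fl_step (k b : ℕ) (n : ℤ) :
    Fl α β ρ (k+1) b n = Fl α β ρ 1 (k+b) n + Fl α β ρ k (b+1) n := by
  have hc := Fl_cocycle α β ρ 1 k b n
  rw [Nat.add_comm 1 k] at hc
  have ha := Fl_antisymm α β ρ b (k+1) n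
  linear_combination - hc + ha

lemma Fl_mul : ∀ (k b : ℕ) (n : ℤ), Fl α β ρ k (b+1) n = (k:ℂ) * Fl α β ρ 1 (k+b) n := by
  intro k
  induction k with
  | zero => intro b n; simp [Fl_zero_left]
  | succ k ih =>
    intro b n
    rw [Fl_step α β ρ k (b+1) n, ih (b+1) n, show k+(b+1) = (k+1)+b from by omega]
    push_cast; ring

lemma Fl_one (m : ℕ) (n : ℤ) : Fl α β ρ 1 m n = 0 := by
  have h1 := Fl_step α β ρ m 0 n
  simp only [Nat.add_zero] at h1
  have h2 : Fl α β ρ m 1 n = (m:ℂ) * Fl α β ρ 1 m n := by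
    have := Fl_mul α β ρ m 0 n
    simpa using this
  have h3 : Fl α β ρ (m+1) 0 n = 0 := by
    rw [Fl_antisymm, Fl_zero_left]; ring
  have h4 : ((m:ℂ)+1) * Fl α β ρ 1 m n = 0 := by
    linear_combination h3 - h1 - h2
  rcases mul_eq_zero.mp h4 with h | h
  · exact absurd h (Nat.cast_add_one_ne_zero m)
  · exact h

lemma q_row (l : ℕ) (i j : ℤ) : q α β ρ (l+1) i j =
    evenInd i * (ρ (i-1) * ρ i) * q α β ρ l (i-2) j
    + (evenInd i * (β (i-1) * ρ i) - oddInd i * (α (i+1) * ρ i)) * q α β ρ l (i-1) j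
    - β i * α (i+1) * q α β ρ l i j
    + (evenInd i * (β i * ρ (i+1)) - oddInd i * (α (i+2) * ρ (i+1))) * q α β ρ l (i+1) j
    + oddInd i * (ρ (i+1) * ρ (i+2)) * q α β ρ l (i+2) j := by
  rw [q_succ]; rfl

lemma q_col (l : ℕ) (i j : ℤ) : q α β ρ (l+1) i j =
    q α β ρ 1 (j-2) j * q α β ρ l i (j-2) + q α β ρ 1 (j-1) j * q α β ρ l i (j-1)
    + q α β ρ 1 j j * q α β ρ l i j + q α β ρ 1 (j+1) j * q α β ρ l i (j+1)
    + q α β ρ 1 (j+2) j * q α β ρ l i (j+2) := by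
  have h := q_mul α β ρ l 1 i j
  rw [show (2*((1:ℕ):ℤ)) = 2 by norm_num] at h
  rw [h, sum5]

lemma q1_m2 (j : ℤ) : q α β ρ 1 (j-2) j = oddInd (j-2) * (ρ (j-1) * ρ j) := by
  have h : q α β ρ 1 (j-2) j = ALLax α β ρ (deltaSeq j) (j-2) := by
    rw [q, Function.iterate_one]
  rw [h]
  simp only [ALLax, deltaSeq]
  rw [if_neg (by omega : ¬(j-2-2 = j)), if_neg (by omega : ¬(j-2-1 = j)),
    if_neg (by omega : ¬(j-2 = j)), if_neg (by omega : ¬(j-2+1 = j)),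
    if_pos (by omega : j-2+2 = j)]
  rw [show j-2+1 = j-1 by ring, show j-2+2 = j by ring]
  ring

lemma q1_m1 (j : ℤ) : q α β ρ 1 (j-1) j
    = evenInd (j-1) * (β (j-1) * ρ j) - oddInd (j-1) * (α (j+1) * ρ j) := by
  have h : q α β ρ 1 (j-1) j = ALLax α β ρ (deltaSeq j) (j-1) := by
    rw [q, Function.iterate_one]
  rw [h]
  simp only [ALLax, deltaSeq]
  rw [if_neg (by omega : ¬(j-1-2 = j)), if_neg (by omega : ¬(j-1-1 = j)),
    if_neg (by omega : ¬(j-1 = j)), if_pos (by omega : j-1+1 = j),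
    if_neg (by omega : ¬(j-1+2 = j))]
  rw [show j-1+1 = j by ring, show j-1+2 = j+1 by ring]
  ring

lemma q1_0 (j : ℤ) : q α β ρ 1 j j = -(β j * α (j+1)) := by
  have h : q α β ρ 1 j j = ALLax α β ρ (deltaSeq j) j := by
    rw [q, Function.iterate_one]
  rw [h]
  simp only [ALLax, deltaSeq]
  rw [if_neg (by omega : ¬(j-2 = j)), if_neg (by omega : ¬(j-1 = j)),
    if_pos trivial, if_neg (by omega : ¬(j+1 = j)), if_neg (by omega : ¬(j+2 = j))]
  ring

lemma q1_p1 (j : ℤ) : q α β ρ 1 (j+1) j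
    = evenInd (j+1) * (β j * ρ (j+1)) - oddInd (j+1) * (α (j+2) * ρ (j+1)) := by
  have h : q α β ρ 1 (j+1) j = ALLax α β ρ (deltaSeq j) (j+1) := by
    rw [q, Function.iterate_one]
  rw [h]
  simp only [ALLax, deltaSeq]
  rw [if_neg (by omega : ¬(j+1-2 = j)), if_pos (by omega : j+1-1 = j),
    if_neg (by omega : ¬(j+1 = j)), if_neg (by omega : ¬(j+1+1 = j)),
    if_neg (by omega : ¬(j+1+2 = j))]
  rw [show j+1-1 = j by ring, show j+1+1 = j+2 by ring]
  ring

lemma q1_p2 (j : ℤ) : q α β ρ 1 (j+2) j = evenInd (j+2) * (ρ (j+1) * ρ (j+2)) := by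
  have h : q α β ρ 1 (j+2) j = ALLax α β ρ (deltaSeq j) (j+2) := by
    rw [q, Function.iterate_one]
  rw [h]
  simp only [ALLax, deltaSeq]
  rw [if_pos (by omega : j+2-2 = j), if_neg (by omega : ¬(j+2-1 = j)),
    if_neg (by omega : ¬(j+2 = j)), if_neg (by omega : ¬(j+2+1 = j)),
    if_neg (by omega : ¬(j+2+2 = j))]
  rw [show j+2-1 = j+1 by ring]
  ring

lemma F1_expand (l : ℕ) (n : ℤ) : Fl α β ρ 1 l n =
    q α β ρ 1 (n-1) n * q α β ρ l n (n-1) + q α β ρ 1 (n-2) n * q α β ρ l n (n-2)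
    + q α β ρ 1 (n-1) (n+1) * q α β ρ l (n+1) (n-1)
    - q α β ρ 1 n (n-1) * q α β ρ l (n-1) n - q α β ρ 1 n (n-2) * q α β ρ l (n-2) n
    - q α β ρ 1 (n+1) (n-1) * q α β ρ l (n-1) (n+1) := by
  have hcore : Finset.Icc (n - 2*((1:ℕ):ℤ)) (n + 2*((1:ℕ):ℤ))
      ⊆ Finset.Icc (n - (2*((1:ℕ):ℤ)+2*((l:ℕ):ℤ)+1)) (n + (2*((1:ℕ):ℤ)+2*((l:ℕ):ℤ)+1)) := by
    intro x hx; simp only [Finset.mem_Icc] at *; push_cast at *; omega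
  have h1 : Fl α β ρ 1 l n = FF α β ρ 1 l (Finset.Icc (n-2) (n+2)) n := by
    unfold Fl
    rw [FF_shrink α β ρ 1 l n _ hcore]
    norm_num
  rw [h1]
  unfold FF
  rw [sum5]
  rw [sum5, sum5, sum5, sum5, sum5]
  have c1 : chi n (n-2) = 0 := if_neg (by omega)
  have c2 : chi n (n-1) = 0 := if_neg (by omega)
  have c3 : chi n n = 1 := if_pos le_rfl
  have c4 : chi n (n+1) = 1 := if_pos (by omega)
  have c5 : chi n (n+2) = 1 := if_pos (by omega)
  rw [c1, c2, c3, c4, c5]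
  have z1 : q α β ρ 1 (n-2) (n+1) = 0 := q_banded α β ρ 1 (n-2) (n+1) (by push_cast; omega)
  have z2 : q α β ρ 1 (n-2) (n+2) = 0 := q_banded α β ρ 1 (n-2) (n+2) (by push_cast; omega)
  have z3 : q α β ρ 1 (n-1) (n+2) = 0 := q_banded α β ρ 1 (n-1) (n+2) (by push_cast; omega)
  have z4 : q α β ρ 1 (n+1) (n-2) = 0 := q_banded α β ρ 1 (n+1) (n-2) (by push_cast; omega)
  have z5 : q α β ρ 1 (n+2) (n-2) = 0 := q_banded α β ρ 1 (n+2) (n-2) (by push_cast; omega)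
  have z6 : q α β ρ 1 (n+2) (n-1) = 0 := q_banded α β ρ 1 (n+2) (n-1) (by push_cast; omega)
  rw [z1, z2, z3, z4, z5, z6]
  ring

lemma evenInd_e {n : ℤ} (h : n % 2 = 0) : evenInd n = 1 := if_pos (Int.even_iff.2 h)
lemma evenInd_o {n : ℤ} (h : n % 2 = 1) : evenInd n = 0 :=
  if_neg (fun hc => by rw [Int.even_iff] at hc; omega)
lemma oddInd_e {n : ℤ} (h : n % 2 = 0) : oddInd n = 0 := if_pos (Int.even_iff.2 h)
lemma oddInd_o {n : ℤ} (h : n % 2 = 1) : oddInd n = 1 :=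
  if_neg (fun hc => by rw [Int.even_iff] at hc; omega)

lemma ghat_succ (l : ℕ) (n : ℤ) : ghat α β ρ (l+1) n = q α β ρ (l+1) n n := rfl
lemma fhat_eq (l : ℕ) (n : ℤ) : fhat α β ρ l n = α n * q α β ρ (l+1) n n
    + ρ n * (if Even n then q α β ρ (l+1) (n-1) n else q α β ρ (l+1) n (n-1)) := rfl
lemma hhat_eq (l : ℕ) (n : ℤ) : hhat α β ρ l n = β n * q α β ρ l n n
    + ρ n * (if Even n then q α β ρ l n (n-1) else q α β ρ l (n-1) n) := rfl

lemma g_step_case (hρ : ∀ m : ℤ, ρ m ^ 2 = 1 - α m * β m) (l : ℕ) (n : ℤ) :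
    ghat α β ρ (l+1) n - ghat α β ρ (l+1) (n-1)
      = α n * hhat α β ρ l (n-1) + β n * fhat α β ρ l n := by
  have hF0 : Fl α β ρ 1 l n = 0 := Fl_one α β ρ l n
  rw [F1_expand] at hF0
  have e3 : q α β ρ 1 (n-1) (n+1) = oddInd (n-1) * (ρ n * ρ (n+1)) := by
    have h := q1_m2 α β ρ (n+1)
    rw [show n+1-2 = n-1 by ring, show n+1-1 = n by ring] at h; exact h
  have e4 : q α β ρ 1 n (n-1)
      = evenInd n * (β (n-1) * ρ n) - oddInd n * (α (n+1) * ρ n) := by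
    have h := q1_p1 α β ρ (n-1)
    rw [show n-1+1 = n by ring, show n-1+2 = n+1 by ring] at h; exact h
  have e5 : q α β ρ 1 n (n-2) = evenInd n * (ρ (n-1) * ρ n) := by
    have h := q1_p2 α β ρ (n-2)
    rw [show n-2+2 = n by ring, show n-2+1 = n-1 by ring] at h; exact h
  have e6 : q α β ρ 1 (n+1) (n-1) = evenInd (n+1) * (ρ n * ρ (n+1)) := by
    have h := q1_p2 α β ρ (n-1)
    rw [show n-1+2 = n+1 by ring, show n-1+1 = n by ring] at h; exact h
  rw [q1_m1 α β ρ n, q1_m2 α β ρ n, e3, e4, e5, e6] at hF0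
  rcases Int.emod_two_eq n with h | h
  · -- n even : row expansions
    have hEn : Even n := Int.even_iff.2 h
    have hOn1 : ¬ Even (n-1) := by rw [Int.even_iff]; omega
    rw [ghat_succ, ghat_succ, hhat_eq, fhat_eq, if_neg hOn1, if_pos hEn]
    rw [q_row α β ρ l n n, q_row α β ρ l (n-1) (n-1), q_row α β ρ l (n-1) n]
    simp only [evenInd_e h, oddInd_e h,
      evenInd_o (show (n-1)%2 = 1 by omega), oddInd_o (show (n-1)%2 = 1 by omega),
      evenInd_e (show (n-2)%2 = 0 by omega), oddInd_e (show (n-2)%2 = 0 by omega),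
      evenInd_o (show (n+1)%2 = 1 by omega), oddInd_o (show (n+1)%2 = 1 by omega),
      evenInd_e (show (n+2)%2 = 0 by omega), oddInd_e (show (n+2)%2 = 0 by omega)] at hF0 ⊢
    rw [show n-1-2 = n-3 by ring, show n-1-1 = n-2 by ring, show n-1+1 = n by ring,
      show n-1+2 = n+1 by ring]
    linear_combination (-1 : ℂ) * hF0
      + (q α β ρ l n n * α (n+1) * β n - q α β ρ l (n+1) n * β n * ρ (n+1)) * hρ n
  · -- n odd : column expansions
    have hOn : ¬ Even n := by rw [Int.even_iff]; omega
    have hEn1 : Even (n-1) := Int.even_iff.2 (by omega)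
    rw [ghat_succ, ghat_succ, hhat_eq, fhat_eq, if_pos hEn1, if_neg hOn]
    rw [q_col α β ρ l n n, q_col α β ρ l (n-1) (n-1), q_col α β ρ l n (n-1)]
    rw [show n-1-2 = n-3 by ring, show n-1-1 = n-2 by ring, show n-1+1 = n by ring,
      show n-1+2 = n+1 by ring]
    have a2 : q α β ρ 1 (n-3) (n-1) = oddInd (n-3) * (ρ (n-2) * ρ (n-1)) := by
      have hh := q1_m2 α β ρ (n-1)
      rw [show n-1-2 = n-3 by ring, show n-1-1 = n-2 by ring] at hh; exact hh
    have a3 : q α β ρ 1 (n-2) (n-1)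
        = evenInd (n-2) * (β (n-2) * ρ (n-1)) - oddInd (n-2) * (α n * ρ (n-1)) := by
      have hh := q1_m1 α β ρ (n-1)
      rw [show n-1-1 = n-2 by ring, show n-1+1 = n by ring] at hh; exact hh
    have a4 : q α β ρ 1 (n-1) (n-1) = -(β (n-1) * α n) := by
      have hh := q1_0 α β ρ (n-1)
      rw [show n-1+1 = n by ring] at hh; exact hh
    rw [a2, a3, a4, e4, e6, q1_m2 α β ρ n, q1_m1 α β ρ n, q1_0 α β ρ n,
      q1_p1 α β ρ n, q1_p2 α β ρ n]
    simp only [evenInd_o h, oddInd_o h,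
      evenInd_e (show (n-1)%2 = 0 by omega), oddInd_e (show (n-1)%2 = 0 by omega),
      evenInd_o (show (n-2)%2 = 1 by omega), oddInd_o (show (n-2)%2 = 1 by omega),
      evenInd_e (show (n-3)%2 = 0 by omega), oddInd_e (show (n-3)%2 = 0 by omega),
      evenInd_e (show (n+1)%2 = 0 by omega), oddInd_e (show (n+1)%2 = 0 by omega),
      evenInd_o (show (n+2)%2 = 1 by omega), oddInd_o (show (n+2)%2 = 1 by omega)] at hF0 ⊢
    linear_combination hF0
      + (q α β ρ l n n * α (n+1) * β n - q α β ρ l n (n+1) * β n * ρ (n+1)) * hρ n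

lemma f_step_case (hρ : ∀ m : ℤ, ρ m ^ 2 = 1 - α m * β m) (l : ℕ) (n : ℤ) :
    fhat α β ρ (l+1) (n-1)
      = fhat α β ρ l n - α n * (ghat α β ρ (l+1) n + ghat α β ρ (l+1) (n-1)) := by
  rcases Int.emod_two_eq n with h | h
  · -- n even, n-1 odd : column expansions for level l+2 entries
    have hEn : Even n := Int.even_iff.2 h
    have hOn1 : ¬ Even (n-1) := by rw [Int.even_iff]; omega
    rw [fhat_eq α β ρ (l+1) (n-1), fhat_eq α β ρ l n, ghat_succ, ghat_succ, if_neg hOn1, if_pos hEn]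
    rw [q_col α β ρ (l+1) (n-1) (n-1), q_col α β ρ (l+1) (n-1) (n-1-1)]
    rw [show n-1-1 = n-2 by ring, show n-1-2 = n-3 by ring, show n-1+1 = n by ring,
      show n-1+2 = n+1 by ring, show n-2-2 = n-4 by ring, show n-2-1 = n-3 by ring,
      show n-2+1 = n-1 by ring, show n-2+2 = n by ring]
    have a2 : q α β ρ 1 (n-3) (n-1) = oddInd (n-3) * (ρ (n-2) * ρ (n-1)) := by
      have hh := q1_m2 α β ρ (n-1)
      rw [show n-1-2 = n-3 by ring, show n-1-1 = n-2 by ring] at hh; exact hh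
    have a3 : q α β ρ 1 (n-2) (n-1)
        = evenInd (n-2) * (β (n-2) * ρ (n-1)) - oddInd (n-2) * (α n * ρ (n-1)) := by
      have hh := q1_m1 α β ρ (n-1)
      rw [show n-1-1 = n-2 by ring, show n-1+1 = n by ring] at hh; exact hh
    have a4 : q α β ρ 1 (n-1) (n-1) = -(β (n-1) * α n) := by
      have hh := q1_0 α β ρ (n-1)
      rw [show n-1+1 = n by ring] at hh; exact hh
    have a5 : q α β ρ 1 n (n-1)
        = evenInd n * (β (n-1) * ρ n) - oddInd n * (α (n+1) * ρ n) := by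
      have hh := q1_p1 α β ρ (n-1)
      rw [show n-1+1 = n by ring, show n-1+2 = n+1 by ring] at hh; exact hh
    have a6 : q α β ρ 1 (n+1) (n-1) = evenInd (n+1) * (ρ n * ρ (n+1)) := by
      have hh := q1_p2 α β ρ (n-1)
      rw [show n-1+2 = n+1 by ring, show n-1+1 = n by ring] at hh; exact hh
    have b2 : q α β ρ 1 (n-4) (n-2) = oddInd (n-4) * (ρ (n-3) * ρ (n-2)) := by
      have hh := q1_m2 α β ρ (n-2)
      rw [show n-2-2 = n-4 by ring, show n-2-1 = n-3 by ring] at hh; exact hh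
    have b3 : q α β ρ 1 (n-3) (n-2)
        = evenInd (n-3) * (β (n-3) * ρ (n-2)) - oddInd (n-3) * (α (n-1) * ρ (n-2)) := by
      have hh := q1_m1 α β ρ (n-2)
      rw [show n-2-1 = n-3 by ring, show n-2+1 = n-1 by ring] at hh; exact hh
    have b4 : q α β ρ 1 (n-2) (n-2) = -(β (n-2) * α (n-1)) := by
      have hh := q1_0 α β ρ (n-2)
      rw [show n-2+1 = n-1 by ring] at hh; exact hh
    have b5 : q α β ρ 1 (n-1) (n-2)
        = evenInd (n-1) * (β (n-2) * ρ (n-1)) - oddInd (n-1) * (α n * ρ (n-1)) := by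
      have hh := q1_p1 α β ρ (n-2)
      rw [show n-2+1 = n-1 by ring, show n-2+2 = n by ring] at hh; exact hh
    have b6 : q α β ρ 1 n (n-2) = evenInd n * (ρ (n-1) * ρ n) := by
      have hh := q1_p2 α β ρ (n-2)
      rw [show n-2+2 = n by ring, show n-2+1 = n-1 by ring] at hh; exact hh
    rw [a2, a3, a4, a5, a6, b2, b3, b4, b5, b6]
    simp only [evenInd_e h, oddInd_e h,
      evenInd_o (show (n-1)%2 = 1 by omega), oddInd_o (show (n-1)%2 = 1 by omega),
      evenInd_e (show (n-2)%2 = 0 by omega), oddInd_e (show (n-2)%2 = 0 by omega),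
      evenInd_o (show (n-3)%2 = 1 by omega), oddInd_o (show (n-3)%2 = 1 by omega),
      evenInd_e (show (n-4)%2 = 0 by omega), oddInd_e (show (n-4)%2 = 0 by omega),
      evenInd_o (show (n+1)%2 = 1 by omega), oddInd_o (show (n+1)%2 = 1 by omega)]
    linear_combination (q α β ρ (l+1) (n-1) n * ρ n
      - q α β ρ (l+1) (n-1) (n-1) * α n) * hρ (n-1)
  · -- n odd, n-1 even : row expansions
    have hOn : ¬ Even n := by rw [Int.even_iff]; omega
    have hEn1 : Even (n-1) := Int.even_iff.2 (by omega)
    rw [fhat_eq α β ρ (l+1) (n-1), fhat_eq α β ρ l n, ghat_succ, ghat_succ, if_pos hEn1, if_neg hOn]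
    rw [q_row α β ρ (l+1) (n-1) (n-1), q_row α β ρ (l+1) (n-1-1) (n-1)]
    rw [show n-1-1 = n-2 by ring, show n-1-2 = n-3 by ring, show n-1+1 = n by ring,
      show n-1+2 = n+1 by ring, show n-2-2 = n-4 by ring, show n-2-1 = n-3 by ring,
      show n-2+1 = n-1 by ring, show n-2+2 = n by ring]
    simp only [evenInd_o h, oddInd_o h,
      evenInd_e (show (n-1)%2 = 0 by omega), oddInd_e (show (n-1)%2 = 0 by omega),
      evenInd_o (show (n-2)%2 = 1 by omega), oddInd_o (show (n-2)%2 = 1 by omega),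
      evenInd_e (show (n-3)%2 = 0 by omega), oddInd_e (show (n-3)%2 = 0 by omega),
      evenInd_o (show (n-4)%2 = 1 by omega), oddInd_o (show (n-4)%2 = 1 by omega),
      evenInd_e (show (n+1)%2 = 0 by omega), oddInd_e (show (n+1)%2 = 0 by omega)]
    linear_combination (q α β ρ (l+1) n (n-1) * ρ n
      - q α β ρ (l+1) (n-1) (n-1) * α n) * hρ (n-1)

lemma h_step_case (hρ : ∀ m : ℤ, ρ m ^ 2 = 1 - α m * β m) (l : ℕ) (n : ℤ) :
    hhat α β ρ (l+1) n
      = hhat α β ρ l (n-1) + β n * (ghat α β ρ (l+1) n + ghat α β ρ (l+1) (n-1)) := by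
  rcases Int.emod_two_eq n with h | h
  · -- n even : row expansions
    have hEn : Even n := Int.even_iff.2 h
    have hOn1 : ¬ Even (n-1) := by rw [Int.even_iff]; omega
    rw [hhat_eq α β ρ (l+1) n, hhat_eq α β ρ l (n-1), ghat_succ, ghat_succ, if_pos hEn, if_neg hOn1]
    rw [q_row α β ρ l n (n-1), q_row α β ρ l (n-1) (n-1)]
    rw [show n-1-1 = n-2 by ring, show n-1-2 = n-3 by ring, show n-1+1 = n by ring,
      show n-1+2 = n+1 by ring]
    simp only [evenInd_e h, oddInd_e h,
      evenInd_o (show (n-1)%2 = 1 by omega), oddInd_o (show (n-1)%2 = 1 by omega)]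
    linear_combination (q α β ρ l (n-1) (n-1) * β (n-1)
      + q α β ρ l (n-2) (n-1) * ρ (n-1)) * hρ n
  · -- n odd : column expansions
    have hOn : ¬ Even n := by rw [Int.even_iff]; omega
    have hEn1 : Even (n-1) := Int.even_iff.2 (by omega)
    rw [hhat_eq α β ρ (l+1) n, hhat_eq α β ρ l (n-1), ghat_succ, ghat_succ, if_neg hOn, if_pos hEn1]
    rw [q_col α β ρ l (n-1) n, q_col α β ρ l (n-1) (n-1)]
    rw [show n-1-1 = n-2 by ring, show n-1-2 = n-3 by ring, show n-1+1 = n by ring,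
      show n-1+2 = n+1 by ring]
    have a2 : q α β ρ 1 (n-3) (n-1) = oddInd (n-3) * (ρ (n-2) * ρ (n-1)) := by
      have hh := q1_m2 α β ρ (n-1)
      rw [show n-1-2 = n-3 by ring, show n-1-1 = n-2 by ring] at hh; exact hh
    have a3 : q α β ρ 1 (n-2) (n-1)
        = evenInd (n-2) * (β (n-2) * ρ (n-1)) - oddInd (n-2) * (α n * ρ (n-1)) := by
      have hh := q1_m1 α β ρ (n-1)
      rw [show n-1-1 = n-2 by ring, show n-1+1 = n by ring] at hh; exact hh
    have a4 : q α β ρ 1 (n-1) (n-1) = -(β (n-1) * α n) := by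
      have hh := q1_0 α β ρ (n-1)
      rw [show n-1+1 = n by ring] at hh; exact hh
    have a5 : q α β ρ 1 n (n-1)
        = evenInd n * (β (n-1) * ρ n) - oddInd n * (α (n+1) * ρ n) := by
      have hh := q1_p1 α β ρ (n-1)
      rw [show n-1+1 = n by ring, show n-1+2 = n+1 by ring] at hh; exact hh
    have a6 : q α β ρ 1 (n+1) (n-1) = evenInd (n+1) * (ρ n * ρ (n+1)) := by
      have hh := q1_p2 α β ρ (n-1)
      rw [show n-1+2 = n+1 by ring, show n-1+1 = n by ring] at hh; exact hh
    rw [a2, a3, a4, a5, a6, q1_m2 α β ρ n, q1_m1 α β ρ n, q1_0 α β ρ n,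
      q1_p1 α β ρ n, q1_p2 α β ρ n]
    simp only [evenInd_o h, oddInd_o h,
      evenInd_e (show (n-1)%2 = 0 by omega), oddInd_e (show (n-1)%2 = 0 by omega),
      evenInd_o (show (n-2)%2 = 1 by omega), oddInd_o (show (n-2)%2 = 1 by omega),
      evenInd_e (show (n-3)%2 = 0 by omega), oddInd_e (show (n-3)%2 = 0 by omega),
      evenInd_e (show (n+1)%2 = 0 by omega), oddInd_e (show (n+1)%2 = 0 by omega),
      evenInd_o (show (n+2)%2 = 1 by omega), oddInd_o (show (n+2)%2 = 1 by omega)]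
    linear_combination (q α β ρ l (n-1) (n-1) * β (n-1)
      + q α β ρ l (n-1) (n-2) * ρ (n-1)) * hρ n

lemma fhat_zero (hρ : ∀ m : ℤ, ρ m ^ 2 = 1 - α m * β m) (n : ℤ) :
    fhat α β ρ 0 n = -α (n+1) := by
  rcases Int.emod_two_eq n with h | h
  · have hEn : Even n := Int.even_iff.2 h
    rw [fhat_eq α β ρ 0 n, if_pos hEn, q1_0 α β ρ n, q1_m1 α β ρ n]
    simp only [evenInd_e h, oddInd_e h,
      evenInd_o (show (n-1)%2 = 1 by omega), oddInd_o (show (n-1)%2 = 1 by omega)]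
    linear_combination (-α (n+1)) * hρ n
  · have hOn : ¬ Even n := by rw [Int.even_iff]; omega
    have a5 : q α β ρ 1 n (n-1)
        = evenInd n * (β (n-1) * ρ n) - oddInd n * (α (n+1) * ρ n) := by
      have hh := q1_p1 α β ρ (n-1)
      rw [show n-1+1 = n by ring, show n-1+2 = n+1 by ring] at hh; exact hh
    rw [fhat_eq α β ρ 0 n, if_neg hOn, q1_0 α β ρ n, a5]
    simp only [evenInd_o h, oddInd_o h]
    linear_combination (-α (n+1)) * hρ n

lemma hhat_zero (n : ℤ) : hhat α β ρ 0 n = β n := by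
  have q0d : q α β ρ 0 n n = 1 := by
    simp [q, deltaSeq]
  have q01 : q α β ρ 0 n (n-1) = 0 := by
    simp only [q, Function.iterate_zero, id_eq, deltaSeq]
    rw [if_neg (by omega)]
  have q02 : q α β ρ 0 (n-1) n = 0 := by
    simp only [q, Function.iterate_zero, id_eq, deltaSeq]
    rw [if_neg (by omega)]
  rw [hhat_eq α β ρ 0 n]
  by_cases hEn : Even n
  · rw [if_pos hEn, q0d, q01]; ring
  · rw [if_neg hEn, q0d, q02]; ring

end ALaux

/-- The matrix elements of powers of the Lax operator `L` produce the homogeneous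
coefficients of the `+`-half of the Ablowitz–Ladik recursion for `(α, β)` with
constant `c₀,₊ = 1`; in particular `f̂₀ = −α⁺` and `ĥ₀ = β`. -/
theorem lax_matrix_elements_satisfy_plus_recursion (α β ρ : ℤ → ℂ)
    (hρ : ∀ n : ℤ, ρ n ^ 2 = 1 - α n * β n) :
    ALRecPlus α β 1 (fhat α β ρ) (ghat α β ρ) (hhat α β ρ)
    ∧ (∀ n : ℤ, fhat α β ρ 0 n = -α (n + 1))
    ∧ (∀ n : ℤ, hhat α β ρ 0 n = β n) := by
  refine ⟨⟨?_, ?_, ?_, ?_, ?_, ?_⟩, ?_, ?_⟩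
  · intro n; rfl
  · intro n; rw [ALaux.fhat_zero α β ρ hρ n]; ring
  · intro n; rw [ALaux.hhat_zero α β ρ n]; ring
  · exact fun ℓ n => ALaux.g_step_case α β ρ hρ ℓ n
  · exact fun ℓ n => ALaux.f_step_case α β ρ hρ ℓ n
  · exact fun ℓ n => ALaux.h_step_case α β ρ hρ ℓ n
  · intro n; exact ALaux.fhat_zero α β ρ hρ n
  · intro n; exact ALaux.hhat_zero α β ρ n
end

section
/- Suppose the families f_{ℓ,±}, g_{ℓ,±}, h_{ℓ,±} satisfy the Ablowitz–Ladik recursion for (α, β), let p = (p₋, p₊) ∈ ℕ₀²∖{(0,0)}, and define the Laurent polynomials F_p, G_p, H_p, K_p as well as, for z ∈ ℂ∖{0}, the matrices U(z,n) = [[z, α(n)], [β(n)z, 1]] and V_p(z,n) = i·[[G_p(z,n−1), −F_p(z,n−1)], [H_p(z,n−1), −K_p(z,n−1)]]. Then the stationary zero-curvature equation U(z,n)V_p(z,n) − V_p(z,n+1)U(z,n) = 0 holds for all z ∈ ℂ∖{0} and all n ∈ ℤ if and only if for all n ∈ ℤ: −α(g_{p₊,+} + g_{p₋,−}⁻) +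 f_{p₊−1,+} − f_{p₋−1,−}⁻ = 0 and β(g_{p₊,+}⁻ + g_{p₋,−}) + h_{p₊−1,+}⁻ − h_{p₋−1,−} = 0. -/
/-- The Laurent polynomial `F_p(z,n) = Σ_{ℓ=1}^{p₋} f_{p₋−ℓ,−}(n) z^{−ℓ}
+ Σ_{ℓ=0}^{p₊−1} f_{p₊−1−ℓ,+}(n) z^{ℓ}`. -/
noncomputable def FLaurent (fm fp : ℕ → ℤ → ℂ) (pm pp : ℕ) (z : ℂ) (n : ℤ) : ℂ :=
  (∑ ℓ ∈ Finset.Icc 1 pm, fm (pm - ℓ) n * z ^ (-(ℓ : ℤ)))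
    + ∑ ℓ ∈ Finset.range pp, fp (pp - 1 - ℓ) n * z ^ (ℓ : ℤ)

/-- The Laurent polynomial `G_p(z,n) = Σ_{ℓ=1}^{p₋} g_{p₋−ℓ,−}(n) z^{−ℓ}
+ Σ_{ℓ=0}^{p₊} g_{p₊−ℓ,+}(n) z^{ℓ}`. -/
noncomputable def GLaurent (gm gp : ℕ → ℤ → ℂ) (pm pp : ℕ) (z : ℂ) (n : ℤ) : ℂ :=
  (∑ ℓ ∈ Finset.Icc 1 pm, gm (pm - ℓ) n * z ^ (-(ℓ : ℤ)))
    + ∑ ℓ ∈ Finset.range (pp + 1), gp (pp - ℓ) n * z ^ (ℓ : ℤ)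

/-- The Laurent polynomial `H_p(z,n) = Σ_{ℓ=0}^{p₋−1} h_{p₋−1−ℓ,−}(n) z^{−ℓ}
+ Σ_{ℓ=1}^{p₊} h_{p₊−ℓ,+}(n) z^{ℓ}`. -/
noncomputable def HLaurent (hm hp : ℕ → ℤ → ℂ) (pm pp : ℕ) (z : ℂ) (n : ℤ) : ℂ :=
  (∑ ℓ ∈ Finset.range pm, hm (pm - 1 - ℓ) n * z ^ (-(ℓ : ℤ)))
    + ∑ ℓ ∈ Finset.Icc 1 pp, hp (pp - ℓ) n * z ^ (ℓ : ℤ)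

/-- The Laurent polynomial `K_p(z,n) = G_p(z,n) + g_{p₋,−}(n) − g_{p₊,+}(n)`. -/
noncomputable def KLaurent (gm gp : ℕ → ℤ → ℂ) (pm pp : ℕ) (z : ℂ) (n : ℤ) : ℂ :=
  GLaurent gm gp pm pp z n + gm pm n - gp pp n

/-- `fPrev f k n = f_{k−1}(n)` with the convention `f_{−1} = 0`. -/
noncomputable def fPrev (f : ℕ → ℤ → ℂ) (k : ℕ) (n : ℤ) : ℂ :=
  if k = 0 then 0 else f (k - 1) n

/-- The stationary zero-curvature matrix `U(z,n)`. -/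
noncomputable def ALUstat (α β : ℤ → ℂ) (z : ℂ) (n : ℤ) : Matrix (Fin 2) (Fin 2) ℂ :=
  !![z, α n; β n * z, 1]

/-- The stationary zero-curvature matrix `V_p(z,n)`. -/
noncomputable def ALVstat (fm fp gm gp hm hp : ℕ → ℤ → ℂ) (pm pp : ℕ)
    (z : ℂ) (n : ℤ) : Matrix (Fin 2) (Fin 2) ℂ :=
  Complex.I •
    !![GLaurent gm gp pm pp z (n - 1), -(FLaurent fm fp pm pp z (n - 1));
       HLaurent hm hp pm pp z (n - 1), -(KLaurent gm gp pm pp z (n - 1))]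

lemma fPrev_zero (f : ℕ → ℤ → ℂ) (n : ℤ) : fPrev f 0 n = 0 := rfl
lemma fPrev_succ (f : ℕ → ℤ → ℂ) (k : ℕ) (n : ℤ) : fPrev f (k + 1) n = f k n := rfl

section coeffs
variable {α β : ℤ → ℂ} {c0p c0m : ℂ} {fp gp hp fm gm hm : ℕ → ℤ → ℂ}

lemma nsub : ∀ n : ℤ, n - 1 + 1 = n := fun n => by ring

lemma coPf (h : ALRecPlus α β c0p fp gp hp) (k : ℕ) (n : ℤ) :
    fPrev fp k n = fp k (n - 1) + α n * (gp k n + gp k (n - 1)) := by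
  cases k with
  | zero => rw [fPrev_zero, h.f0, h.g0, h.g0, nsub]; ring
  | succ ℓ => rw [fPrev_succ, h.f_step]; ring

lemma coMf (h : ALRecMinus α β c0m fm gm hm) (m : ℕ) (n : ℤ) :
    fm m n = fPrev fm m (n - 1) + α n * (gm m n + gm m (n - 1)) := by
  cases m with
  | zero => rw [fPrev_zero, h.f0, h.g0, h.g0]; ring
  | succ ℓ => rw [fPrev_succ, h.f_step]

lemma coPh (h : ALRecPlus α β c0p fp gp hp) (k : ℕ) (n : ℤ) :
    hp k n = β n * (gp k n + gp k (n - 1)) + fPrev hp k (n - 1) := by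
  cases k with
  | zero => rw [fPrev_zero, h.h0, h.g0, h.g0]; ring
  | succ ℓ => rw [fPrev_succ, h.h_step]; ring

lemma coMh (h : ALRecMinus α β c0m fm gm hm) (m : ℕ) (n : ℤ) :
    fPrev hm m n = β n * (gm m n + gm m (n - 1)) + hm m (n - 1) := by
  cases m with
  | zero => rw [fPrev_zero, h.h0, h.g0, h.g0, nsub]; ring
  | succ ℓ =>
      rw [fPrev_succ, h.h_step ℓ n]; ring

lemma coPg (h : ALRecPlus α β c0p fp gp hp) (k : ℕ) (n : ℤ) :
    gp k n = gp k (n - 1) + β n * fPrev fp k n + α n * fPrev hp k (n - 1) := by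
  cases k with
  | zero => rw [fPrev_zero, fPrev_zero, h.g0, h.g0]; ring
  | succ ℓ =>
      rw [fPrev_succ, fPrev_succ]
      have := h.g_step ℓ n
      linear_combination this

lemma coMg (h : ALRecMinus α β c0m fm gm hm) (m : ℕ) (n : ℤ) :
    gm m n = gm m (n - 1) + β n * fm m n + α n * hm m (n - 1) := by
  cases m with
  | zero => rw [h.g0, h.g0, h.f0, h.h0, nsub]; ring
  | succ ℓ =>
      have hg := h.g_step ℓ n
      have hf := h.f_step ℓ n
      have hh := h.h_step ℓ n
      linear_combination hg - β n * hf - α n * hh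

lemma coPg2 (h : ALRecPlus α β c0p fp gp hp) (k : ℕ) (n : ℤ) :
    gp k n = gp k (n - 1) + β n * fp k (n - 1) + α n * hp k n := by
  cases k with
  | zero => rw [h.g0, h.g0, h.f0, h.h0, nsub]; ring
  | succ ℓ =>
      have hg := h.g_step ℓ n
      have hf := h.f_step ℓ n
      have hh := h.h_step ℓ n
      linear_combination hg - β n * hf - α n * hh

lemma coMg2 (h : ALRecMinus α β c0m fm gm hm) (m : ℕ) (n : ℤ) :
    gm m n = gm m (n - 1) + β n * fPrev fm m (n - 1) + α n * fPrev hm m n := by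
  cases m with
  | zero => rw [fPrev_zero, fPrev_zero, h.g0, h.g0]; ring
  | succ ℓ =>
      rw [fPrev_succ, fPrev_succ]
      linear_combination h.g_step ℓ n

end coeffs


lemma icc_to_range (f : ℕ → ℂ) (p : ℕ) :
    ∑ ℓ ∈ Finset.Icc 1 p, f ℓ = ∑ i ∈ Finset.range p, f (1 + i) := by
  induction p with
  | zero => simp
  | succ p ih =>
      rw [Finset.sum_range_succ, ← ih, Finset.sum_Icc_succ_top (by omega)]
      rw [Nat.add_comm 1 p]

lemma sum_extend (f d w : ℕ → ℂ) (p : ℕ) (hd0 : d 0 = 0) (hd : ∀ k, d (k + 1) = f k) :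
    ∑ i ∈ Finset.range p, f (p - 1 - i) * w i = ∑ i ∈ Finset.range (p + 1), d (p - i) * w i := by
  rw [Finset.sum_range_succ, Nat.sub_self, hd0, zero_mul, add_zero]
  refine Finset.sum_congr rfl fun i hi => ?_
  have : p - i = (p - 1 - i) + 1 := by have := Finset.mem_range.mp hi; omega
  rw [this, hd]

lemma sum_peel (f w : ℕ → ℂ) (p : ℕ) :
    ∑ i ∈ Finset.range (p + 1), f (p - i) * w i
      = (∑ i ∈ Finset.range p, f (p - 1 - i) * w (i + 1)) + f p * w 0 := by
  have h := Finset.sum_range_succ' (fun i => f (p - i) * w i) p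
  simp only [Nat.sub_zero] at h
  rw [h]
  congr 1
  exact Finset.sum_congr rfl fun i _ => by rw [Nat.sub_sub, Nat.add_comm 1 i]

lemma mul_zpow_sum {z : ℂ} (hz : z ≠ 0) (s : Finset ℕ) (c : ℕ → ℂ) (e e' : ℕ → ℤ)
    (he : ∀ i, e' i = e i + 1) :
    z * ∑ i ∈ s, c i * z ^ (e i) = ∑ i ∈ s, c i * z ^ (e' i) := by
  rw [Finset.mul_sum]
  exact Finset.sum_congr rfl fun i _ => by rw [he, zpow_add_one₀ hz]; ring

lemma sum_split4 (s : Finset ℕ) (a b c d w : ℕ → ℂ) (x y : ℂ) :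
    ∑ i ∈ s, (a i - b i + x * c i + y * d i) * w i
      = (∑ i ∈ s, a i * w i) - (∑ i ∈ s, b i * w i) + x * (∑ i ∈ s, c i * w i)
        + y * (∑ i ∈ s, d i * w i) := by
  rw [Finset.mul_sum, Finset.mul_sum, ← Finset.sum_sub_distrib, ← Finset.sum_add_distrib,
    ← Finset.sum_add_distrib]
  exact Finset.sum_congr rfl fun i _ => by ring


lemma F_range (fm fp : ℕ → ℤ → ℂ) (pm pp : ℕ) (z : ℂ) (n : ℤ) :
    FLaurent fm fp pm pp z n
      = (∑ i ∈ Finset.range pm, fm (pm - 1 - i) n * z ^ (-(1 + (i : ℤ))))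
        + ∑ i ∈ Finset.range pp, fp (pp - 1 - i) n * z ^ (i : ℤ) := by
  rw [FLaurent, icc_to_range]
  congr 1
  refine Finset.sum_congr rfl fun i _ => ?_
  rw [show pm - (1 + i) = pm - 1 - i from by omega]
  norm_num

lemma G_range (gm gp : ℕ → ℤ → ℂ) (pm pp : ℕ) (z : ℂ) (n : ℤ) :
    GLaurent gm gp pm pp z n
      = (∑ i ∈ Finset.range pm, gm (pm - 1 - i) n * z ^ (-(1 + (i : ℤ))))
        + ∑ i ∈ Finset.range (pp + 1), gp (pp - i) n * z ^ (i : ℤ) := by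
  rw [GLaurent, icc_to_range]
  congr 1
  refine Finset.sum_congr rfl fun i _ => ?_
  rw [show pm - (1 + i) = pm - 1 - i from by omega]
  norm_num

lemma H_range (hm hp : ℕ → ℤ → ℂ) (pm pp : ℕ) (z : ℂ) (n : ℤ) :
    HLaurent hm hp pm pp z n
      = (∑ i ∈ Finset.range pm, hm (pm - 1 - i) n * z ^ (-(i : ℤ)))
        + ∑ i ∈ Finset.range pp, hp (pp - 1 - i) n * z ^ (1 + (i : ℤ)) := by
  rw [HLaurent, icc_to_range]
  congr 1
  refine Finset.sum_congr rfl fun i _ => ?_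
  rw [show pp - (1 + i) = pp - 1 - i from by omega]
  norm_num

lemma sum_peel_exp (f : ℕ → ℂ) (z : ℂ) (e e' : ℕ → ℤ) (v : ℂ) (p : ℕ)
    (he : ∀ i, e' i = e (i + 1)) (hv : v = z ^ (e 0)) :
    ∑ i ∈ Finset.range (p + 1), f (p - i) * z ^ (e i)
      = (∑ i ∈ Finset.range p, f (p - 1 - i) * z ^ (e' i)) + f p * v := by
  have h := sum_peel f (fun i => z ^ (e i)) p
  rw [h, hv]
  congr 1
  exact Finset.sum_congr rfl fun i _ => by rw [he]

lemma sum_split3 (s : Finset ℕ) (a b c w : ℕ → ℂ) (x : ℂ) :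
    ∑ i ∈ s, (x * (a i + b i) + c i) * w i
      = x * (∑ i ∈ s, a i * w i) + x * (∑ i ∈ s, b i * w i) + ∑ i ∈ s, c i * w i := by
  rw [Finset.mul_sum, Finset.mul_sum, ← Finset.sum_add_distrib, ← Finset.sum_add_distrib]
  exact Finset.sum_congr rfl fun i _ => by ring

lemma sum_split4b (s : Finset ℕ) (a b c d w : ℕ → ℂ) (x : ℂ) :
    ∑ i ∈ s, (x * (a i + b i) + c i - d i) * w i
      = x * (∑ i ∈ s, a i * w i) + x * (∑ i ∈ s, b i * w i) + (∑ i ∈ s, c i * w i)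
        - ∑ i ∈ s, d i * w i := by
  rw [Finset.mul_sum, Finset.mul_sum, ← Finset.sum_add_distrib, ← Finset.sum_add_distrib,
    ← Finset.sum_sub_distrib]
  exact Finset.sum_congr rfl fun i _ => by ring

section identities
variable {α β : ℤ → ℂ} {c0p c0m : ℂ} {fp gp hp fm gm hm : ℕ → ℤ → ℂ}

lemma entryC (hP : ALRecPlus α β c0p fp gp hp) (hM : ALRecMinus α β c0m fm gm hm)
    (pm pp : ℕ) {z : ℂ} (hz : z ≠ 0) (n : ℤ) :
    z * GLaurent gm gp pm pp z (n - 1) - z * GLaurent gm gp pm pp z n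
      + β n * (z * FLaurent fm fp pm pp z n) + α n * HLaurent hm hp pm pp z (n - 1) = 0 := by
  rw [G_range gm gp pm pp z (n - 1), G_range gm gp pm pp z n, F_range fm fp pm pp z n,
    H_range hm hp pm pp z (n - 1)]
  have h1 := mul_zpow_sum hz (Finset.range pm) (fun i => gm (pm - 1 - i) (n - 1))
    (fun i => -(1 + (i : ℤ))) (fun i => -(i : ℤ)) (fun i => by ring)
  have h2 := mul_zpow_sum hz (Finset.range pm) (fun i => gm (pm - 1 - i) n)
    (fun i => -(1 + (i : ℤ))) (fun i => -(i : ℤ)) (fun i => by ring)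
  have h3 := mul_zpow_sum hz (Finset.range (pp + 1)) (fun i => gp (pp - i) (n - 1))
    (fun i => (i : ℤ)) (fun i => 1 + (i : ℤ)) (fun i => by ring)
  have h4 := mul_zpow_sum hz (Finset.range (pp + 1)) (fun i => gp (pp - i) n)
    (fun i => (i : ℤ)) (fun i => 1 + (i : ℤ)) (fun i => by ring)
  have h5 := mul_zpow_sum hz (Finset.range pm) (fun i => fm (pm - 1 - i) n)
    (fun i => -(1 + (i : ℤ))) (fun i => -(i : ℤ)) (fun i => by ring)
  have h6 := mul_zpow_sum hz (Finset.range pp) (fun i => fp (pp - 1 - i) n)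
    (fun i => (i : ℤ)) (fun i => 1 + (i : ℤ)) (fun i => by ring)
  have h7 := sum_extend (fun k => fp k n) (fun k => fPrev fp k n)
    (fun i => z ^ (1 + (i : ℤ))) pp (fPrev_zero _ _) (fun k => fPrev_succ _ _ _)
  have h8 := sum_extend (fun k => hp k (n - 1)) (fun k => fPrev hp k (n - 1))
    (fun i => z ^ (1 + (i : ℤ))) pp (fPrev_zero _ _) (fun k => fPrev_succ _ _ _)
  have hs1 := sum_split4 (Finset.range (pp + 1)) (fun i => gp (pp - i) (n - 1))
    (fun i => gp (pp - i) n) (fun i => fPrev fp (pp - i) n) (fun i => fPrev hp (pp - i) (n - 1))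
    (fun i => z ^ (1 + (i : ℤ))) (β n) (α n)
  have hs2 := sum_split4 (Finset.range pm) (fun i => gm (pm - 1 - i) (n - 1))
    (fun i => gm (pm - 1 - i) n) (fun i => fm (pm - 1 - i) n) (fun i => hm (pm - 1 - i) (n - 1))
    (fun i => z ^ (-(i : ℤ))) (β n) (α n)
  have hz1 : ∑ i ∈ Finset.range (pp + 1),
      (gp (pp - i) (n - 1) - gp (pp - i) n + β n * fPrev fp (pp - i) n
        + α n * fPrev hp (pp - i) (n - 1)) * z ^ (1 + (i : ℤ)) = 0 :=
    Finset.sum_eq_zero fun i _ => by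
      have hc := coPg hP (pp - i) n
      rw [show gp (pp - i) (n - 1) - gp (pp - i) n + β n * fPrev fp (pp - i) n
        + α n * fPrev hp (pp - i) (n - 1) = 0 from by linear_combination -hc, zero_mul]
  have hz2 : ∑ i ∈ Finset.range pm,
      (gm (pm - 1 - i) (n - 1) - gm (pm - 1 - i) n + β n * fm (pm - 1 - i) n
        + α n * hm (pm - 1 - i) (n - 1)) * z ^ (-(i : ℤ)) = 0 :=
    Finset.sum_eq_zero fun i _ => by
      have hc := coMg hM (pm - 1 - i) n
      rw [show gm (pm - 1 - i) (n - 1) - gm (pm - 1 - i) n + β n * fm (pm - 1 - i) n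
        + α n * hm (pm - 1 - i) (n - 1) = 0 from by linear_combination -hc, zero_mul]
  linear_combination h1 - h2 + h3 - h4 + β n * (h5 + h6 + h7) + α n * h8 + hz1 - hs1 + hz2 - hs2

lemma entryA (hP : ALRecPlus α β c0p fp gp hp) (hM : ALRecMinus α β c0m fm gm hm)
    (pm pp : ℕ) {z : ℂ} (hz : z ≠ 0) (n : ℤ) :
    FLaurent fm fp pm pp z n - z * FLaurent fm fp pm pp z (n - 1)
      - α n * (GLaurent gm gp pm pp z n + KLaurent gm gp pm pp z (n - 1))
      = -(α n) * (gp pp n + gm pm (n - 1)) + fPrev fp pp n - fPrev fm pm (n - 1) := by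
  rw [KLaurent, F_range fm fp pm pp z n, F_range fm fp pm pp z (n - 1),
    G_range gm gp pm pp z n, G_range gm gp pm pp z (n - 1)]
  have a1 := sum_extend (fun k => fp k n) (fun k => fPrev fp k n)
    (fun i => z ^ (i : ℤ)) pp (fPrev_zero _ _) (fun k => fPrev_succ _ _ _)
  have a2 := sum_peel_exp (fun k => fPrev fp k n) z (fun i => (i : ℤ))
    (fun i => 1 + (i : ℤ)) 1 pp (fun i => by push_cast; ring) (by simp)
  have a3 := mul_zpow_sum hz (Finset.range pp) (fun i => fp (pp - 1 - i) (n - 1))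
    (fun i => (i : ℤ)) (fun i => 1 + (i : ℤ)) (fun i => by ring)
  have a4 := sum_peel_exp (fun k => gp k n) z (fun i => (i : ℤ))
    (fun i => 1 + (i : ℤ)) 1 pp (fun i => by push_cast; ring) (by simp)
  have a5 := sum_peel_exp (fun k => gp k (n - 1)) z (fun i => (i : ℤ))
    (fun i => 1 + (i : ℤ)) 1 pp (fun i => by push_cast; ring) (by simp)
  have a6 := mul_zpow_sum hz (Finset.range pm) (fun i => fm (pm - 1 - i) (n - 1))
    (fun i => -(1 + (i : ℤ))) (fun i => -(i : ℤ)) (fun i => by ring)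
  have a7 := sum_extend (fun k => fm k (n - 1)) (fun k => fPrev fm k (n - 1))
    (fun i => z ^ (-(i : ℤ))) pm (fPrev_zero _ _) (fun k => fPrev_succ _ _ _)
  have a8 := sum_peel_exp (fun k => fPrev fm k (n - 1)) z (fun i => -(i : ℤ))
    (fun i => -(1 + (i : ℤ))) 1 pm (fun i => by push_cast; ring) (by simp)
  have as1 := sum_split4 (Finset.range pp) (fun i => fPrev fp (pp - 1 - i) n)
    (fun i => fp (pp - 1 - i) (n - 1)) (fun i => gp (pp - 1 - i) n)
    (fun i => gp (pp - 1 - i) (n - 1)) (fun i => z ^ (1 + (i : ℤ))) (-(α n)) (-(α n))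
  have az1 : ∑ i ∈ Finset.range pp,
      (fPrev fp (pp - 1 - i) n - fp (pp - 1 - i) (n - 1) + -(α n) * gp (pp - 1 - i) n
        + -(α n) * gp (pp - 1 - i) (n - 1)) * z ^ (1 + (i : ℤ)) = 0 :=
    Finset.sum_eq_zero fun i _ => by
      have hc := coPf hP (pp - 1 - i) n
      rw [show fPrev fp (pp - 1 - i) n - fp (pp - 1 - i) (n - 1) + -(α n) * gp (pp - 1 - i) n
        + -(α n) * gp (pp - 1 - i) (n - 1) = 0 from by linear_combination hc, zero_mul]
  have as2 := sum_split4 (Finset.range pm) (fun i => fm (pm - 1 - i) n)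
    (fun i => fPrev fm (pm - 1 - i) (n - 1)) (fun i => gm (pm - 1 - i) n)
    (fun i => gm (pm - 1 - i) (n - 1)) (fun i => z ^ (-(1 + (i : ℤ)))) (-(α n)) (-(α n))
  have az2 : ∑ i ∈ Finset.range pm,
      (fm (pm - 1 - i) n - fPrev fm (pm - 1 - i) (n - 1) + -(α n) * gm (pm - 1 - i) n
        + -(α n) * gm (pm - 1 - i) (n - 1)) * z ^ (-(1 + (i : ℤ))) = 0 :=
    Finset.sum_eq_zero fun i _ => by
      have hc := coMf hM (pm - 1 - i) n
      rw [show fm (pm - 1 - i) n - fPrev fm (pm - 1 - i) (n - 1) + -(α n) * gm (pm - 1 - i) n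
        + -(α n) * gm (pm - 1 - i) (n - 1) = 0 from by linear_combination hc, zero_mul]
  linear_combination a1 + a2 - a3 - α n * a4 - α n * a5 - a6 - a7 - a8 - as1 + az1 - as2 + az2

lemma entryB (hP : ALRecPlus α β c0p fp gp hp) (hM : ALRecMinus α β c0m fm gm hm)
    (pm pp : ℕ) {z : ℂ} (hz : z ≠ 0) (n : ℤ) :
    β n * (z * GLaurent gm gp pm pp z (n - 1)) + HLaurent hm hp pm pp z (n - 1)
      - z * HLaurent hm hp pm pp z n + β n * (z * KLaurent gm gp pm pp z n)
      = z * (β n * (gp pp (n - 1) + gm pm n) + fPrev hp pp (n - 1) - fPrev hm pm n) := by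
  rw [KLaurent, G_range gm gp pm pp z (n - 1), G_range gm gp pm pp z n,
    H_range hm hp pm pp z (n - 1), H_range hm hp pm pp z n]
  have b1 := mul_zpow_sum hz (Finset.range (pp + 1)) (fun i => gp (pp - i) (n - 1))
    (fun i => (i : ℤ)) (fun i => 1 + (i : ℤ)) (fun i => by ring)
  have b4 := mul_zpow_sum hz (Finset.range (pp + 1)) (fun i => gp (pp - i) n)
    (fun i => (i : ℤ)) (fun i => 1 + (i : ℤ)) (fun i => by ring)
  have b3 := mul_zpow_sum hz (Finset.range pm) (fun i => gm (pm - 1 - i) (n - 1))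
    (fun i => -(1 + (i : ℤ))) (fun i => -(i : ℤ)) (fun i => by ring)
  have b3' := mul_zpow_sum hz (Finset.range pm) (fun i => gm (pm - 1 - i) n)
    (fun i => -(1 + (i : ℤ))) (fun i => -(i : ℤ)) (fun i => by ring)
  have b5 := sum_extend (fun k => hp k (n - 1)) (fun k => fPrev hp k (n - 1))
    (fun i => z ^ (1 + (i : ℤ))) pp (fPrev_zero _ _) (fun k => fPrev_succ _ _ _)
  have b6 := mul_zpow_sum hz (Finset.range pp) (fun i => hp (pp - 1 - i) n)
    (fun i => 1 + (i : ℤ)) (fun i => 2 + (i : ℤ)) (fun i => by ring)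
  have b7 := mul_zpow_sum hz (Finset.range pm) (fun i => hm (pm - 1 - i) n)
    (fun i => -(i : ℤ)) (fun i => 1 - (i : ℤ)) (fun i => by ring)
  have b8 := sum_extend (fun k => hm k n) (fun k => fPrev hm k n)
    (fun i => z ^ (1 - (i : ℤ))) pm (fPrev_zero _ _) (fun k => fPrev_succ _ _ _)
  have b9 := sum_peel_exp (fun k => fPrev hm k n) z (fun i => 1 - (i : ℤ))
    (fun i => -(i : ℤ)) z pm (fun i => by push_cast; ring) (by simp)
  have hb1 := sum_split3 (Finset.range (pp + 1)) (fun i => gp (pp - i) (n - 1))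
    (fun i => gp (pp - i) n) (fun i => fPrev hp (pp - i) (n - 1))
    (fun i => z ^ (1 + (i : ℤ))) (β n)
  have hb2 := sum_peel_exp (fun k => β n * (gp k (n - 1) + gp k n) + fPrev hp k (n - 1)) z
    (fun i => 1 + (i : ℤ)) (fun i => 2 + (i : ℤ)) z pp (fun i => by push_cast; ring)
    (by simp)
  have hb3 : ∑ i ∈ Finset.range pp,
      (β n * (gp (pp - 1 - i) (n - 1) + gp (pp - 1 - i) n)
        + fPrev hp (pp - 1 - i) (n - 1)) * z ^ (2 + (i : ℤ))
      = ∑ i ∈ Finset.range pp, hp (pp - 1 - i) n * z ^ (2 + (i : ℤ)) :=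
    Finset.sum_congr rfl fun i _ => by
      have hc := coPh hP (pp - 1 - i) n
      rw [show β n * (gp (pp - 1 - i) (n - 1) + gp (pp - 1 - i) n)
        + fPrev hp (pp - 1 - i) (n - 1) = hp (pp - 1 - i) n from by linear_combination -hc]
  have hm1 := sum_split4b (Finset.range pm) (fun i => gm (pm - 1 - i) (n - 1))
    (fun i => gm (pm - 1 - i) n) (fun i => hm (pm - 1 - i) (n - 1))
    (fun i => fPrev hm (pm - 1 - i) n) (fun i => z ^ (-(i : ℤ))) (β n)
  have hm2 : ∑ i ∈ Finset.range pm,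
      (β n * (gm (pm - 1 - i) (n - 1) + gm (pm - 1 - i) n) + hm (pm - 1 - i) (n - 1)
        - fPrev hm (pm - 1 - i) n) * z ^ (-(i : ℤ)) = 0 :=
    Finset.sum_eq_zero fun i _ => by
      have hc := coMh hM (pm - 1 - i) n
      rw [show β n * (gm (pm - 1 - i) (n - 1) + gm (pm - 1 - i) n) + hm (pm - 1 - i) (n - 1)
        - fPrev hm (pm - 1 - i) n = 0 from by linear_combination -hc, zero_mul]
  linear_combination β n * b3 + β n * b1 + β n * b3' + β n * b4 + b5 - b7 - b8 - b9 - b6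
    - hb1 + hb2 + hb3 - hm1 + hm2

lemma entryD (hP : ALRecPlus α β c0p fp gp hp) (hM : ALRecMinus α β c0m fm gm hm)
    (pm pp : ℕ) {z : ℂ} (hz : z ≠ 0) (n : ℤ) :
    KLaurent gm gp pm pp z n - KLaurent gm gp pm pp z (n - 1)
      - β n * (z * FLaurent fm fp pm pp z (n - 1)) - α n * HLaurent hm hp pm pp z n = 0 := by
  rw [KLaurent, KLaurent, G_range gm gp pm pp z n, G_range gm gp pm pp z (n - 1),
    F_range fm fp pm pp z (n - 1), H_range hm hp pm pp z n]
  have d1 := sum_peel_exp (fun k => gp k n) z (fun i => (i : ℤ))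
    (fun i => 1 + (i : ℤ)) 1 pp (fun i => by push_cast; ring) (by simp)
  have d2 := sum_peel_exp (fun k => gp k (n - 1)) z (fun i => (i : ℤ))
    (fun i => 1 + (i : ℤ)) 1 pp (fun i => by push_cast; ring) (by simp)
  have d3 := mul_zpow_sum hz (Finset.range pp) (fun i => fp (pp - 1 - i) (n - 1))
    (fun i => (i : ℤ)) (fun i => 1 + (i : ℤ)) (fun i => by ring)
  have d4 := mul_zpow_sum hz (Finset.range pm) (fun i => fm (pm - 1 - i) (n - 1))
    (fun i => -(1 + (i : ℤ))) (fun i => -(i : ℤ)) (fun i => by ring)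
  have d5 := sum_extend (fun k => fm k (n - 1)) (fun k => fPrev fm k (n - 1))
    (fun i => z ^ (-(i : ℤ))) pm (fPrev_zero _ _) (fun k => fPrev_succ _ _ _)
  have d6 := sum_peel_exp (fun k => fPrev fm k (n - 1)) z (fun i => -(i : ℤ))
    (fun i => -(1 + (i : ℤ))) 1 pm (fun i => by push_cast; ring) (by simp)
  have d7 := sum_extend (fun k => hm k n) (fun k => fPrev hm k n)
    (fun i => z ^ (-(i : ℤ))) pm (fPrev_zero _ _) (fun k => fPrev_succ _ _ _)
  have d8 := sum_peel_exp (fun k => fPrev hm k n) z (fun i => -(i : ℤ))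
    (fun i => -(1 + (i : ℤ))) 1 pm (fun i => by push_cast; ring) (by simp)
  have ds1 := sum_split4 (Finset.range pp) (fun i => gp (pp - 1 - i) n)
    (fun i => gp (pp - 1 - i) (n - 1)) (fun i => fp (pp - 1 - i) (n - 1))
    (fun i => hp (pp - 1 - i) n) (fun i => z ^ (1 + (i : ℤ))) (-(β n)) (-(α n))
  have dz1 : ∑ i ∈ Finset.range pp,
      (gp (pp - 1 - i) n - gp (pp - 1 - i) (n - 1) + -(β n) * fp (pp - 1 - i) (n - 1)
        + -(α n) * hp (pp - 1 - i) n) * z ^ (1 + (i : ℤ)) = 0 :=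
    Finset.sum_eq_zero fun i _ => by
      have hc := coPg2 hP (pp - 1 - i) n
      rw [show gp (pp - 1 - i) n - gp (pp - 1 - i) (n - 1) + -(β n) * fp (pp - 1 - i) (n - 1)
        + -(α n) * hp (pp - 1 - i) n = 0 from by linear_combination hc, zero_mul]
  have ds2 := sum_split4 (Finset.range pm) (fun i => gm (pm - 1 - i) n)
    (fun i => gm (pm - 1 - i) (n - 1)) (fun i => fPrev fm (pm - 1 - i) (n - 1))
    (fun i => fPrev hm (pm - 1 - i) n) (fun i => z ^ (-(1 + (i : ℤ)))) (-(β n)) (-(α n))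
  have dz2 : ∑ i ∈ Finset.range pm,
      (gm (pm - 1 - i) n - gm (pm - 1 - i) (n - 1)
        + -(β n) * fPrev fm (pm - 1 - i) (n - 1)
        + -(α n) * fPrev hm (pm - 1 - i) n) * z ^ (-(1 + (i : ℤ))) = 0 :=
    Finset.sum_eq_zero fun i _ => by
      have hc := coMg2 hM (pm - 1 - i) n
      rw [show gm (pm - 1 - i) n - gm (pm - 1 - i) (n - 1)
        + -(β n) * fPrev fm (pm - 1 - i) (n - 1)
        + -(α n) * fPrev hm (pm - 1 - i) n = 0 from by linear_combination hc, zero_mul]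
  have hcm := coMg2 hM pm n
  linear_combination d1 - d2 - β n * d3 - β n * (d4 + d5 + d6) - α n * (d7 + d8)
    - ds1 + dz1 - ds2 + dz2 + hcm

end identities
-- appended after base
section mat
variable {α β : ℤ → ℂ} {c0p c0m : ℂ} {fp gp hp fm gm hm : ℕ → ℤ → ℂ}

lemma entry_matrix (hP : ALRecPlus α β c0p fp gp hp) (hM : ALRecMinus α β c0m fm gm hm)
    (pm pp : ℕ) {z : ℂ} (hz : z ≠ 0) (n : ℤ) :
    ALUstat α β z n * ALVstat fm fp gm gp hm hp pm pp z n
        - ALVstat fm fp gm gp hm hp pm pp z (n + 1) * ALUstat α β z n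
      = Complex.I •
        !![0, -(α n) * (gp pp n + gm pm (n - 1)) + fPrev fp pp n - fPrev fm pm (n - 1);
           z * (β n * (gp pp (n - 1) + gm pm n) + fPrev hp pp (n - 1) - fPrev hm pm n), 0] := by
  have e1 := entryA hP hM pm pp hz n
  have e2 := entryB hP hM pm pp hz n
  have e3 := entryC hP hM pm pp hz n
  have e4 := entryD hP hM pm pp hz n
  ext i j
  fin_cases i <;> fin_cases j <;>
    simp [ALUstat, ALVstat, Matrix.mul_apply, Fin.sum_univ_two, add_sub_cancel_right]
  · linear_combination Complex.I * e3
  · linear_combination Complex.I * e1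
  · linear_combination Complex.I * e2
  · linear_combination Complex.I * e4

end mat

/-- The stationary zero-curvature equation `U V_p − V_p⁺ U = 0` holds for all
`z ∈ ℂ∖{0}` and all `n ∈ ℤ` if and only if `(α, β)` satisfies the `p`-th stationary
Ablowitz–Ladik system. -/
theorem stationary_zero_curvature_iff (α β : ℤ → ℂ) (c0p c0m : ℂ)
    (fp gp hp fm gm hm : ℕ → ℤ → ℂ)
    (h : ALRecursion α β c0p c0m fp gp hp fm gm hm)
    (pm pp : ℕ) (hpne : (pm, pp) ≠ (0, 0)) :
    (∀ z : ℂ, z ≠ 0 → ∀ n : ℤ,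
        ALUstat α β z n * ALVstat fm fp gm gp hm hp pm pp z n
          - ALVstat fm fp gm gp hm hp pm pp z (n + 1) * ALUstat α β z n = 0)
      ↔ (∀ n : ℤ,
          -(α n) * (gp pp n + gm pm (n - 1))
              + fPrev fp pp n - fPrev fm pm (n - 1) = 0
          ∧ β n * (gp pp (n - 1) + gm pm n)
              + fPrev hp pp (n - 1) - fPrev hm pm n = 0) := by
  obtain ⟨hP, hM⟩ := h
  constructor
  · intro H n
    have hm1 := entry_matrix hP hM pm pp (z := 1) one_ne_zero n
    rw [H 1 one_ne_zero n] at hm1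
    have hM0 : !![0, -(α n) * (gp pp n + gm pm (n - 1)) + fPrev fp pp n - fPrev fm pm (n - 1);
        (1 : ℂ) * (β n * (gp pp (n - 1) + gm pm n) + fPrev hp pp (n - 1) - fPrev hm pm n), 0]
        = (0 : Matrix (Fin 2) (Fin 2) ℂ) := by
      rcases smul_eq_zero.mp hm1.symm with h0 | h0
      · exact absurd h0 Complex.I_ne_zero
      · exact h0
    constructor
    · have := congrFun (congrFun hM0 0) 1
      simpa using this
    · have := congrFun (congrFun hM0 1) 0
      simpa using this
  · intro hs z hz n
    rw [entry_matrix hP hM pm pp hz n, (hs n).1, (hs n).2, mul_zero]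
    have : !![(0 : ℂ), 0; 0, 0] = (0 : Matrix (Fin 2) (Fin 2) ℂ) := by
      ext i j
      fin_cases i <;> fin_cases j <;> simp
    rw [this, smul_zero]
end

section
/- Suppose the families f_{ℓ,±}, g_{ℓ,±}, h_{ℓ,±} satisfy the Ablowitz–Ladik recursion for (α, β), let p₋, p₊ ∈ ℕ, and assume α(n)β(n) ≠ 1 for all n ∈ ℤ. If (α, β) satisfies the p-th stationary Ablowitz–Ladik system, i.e., −α(g_{p₊,+} + g_{p₋,−}⁻) + f_{p₊−1,+} − f_{p₋−1,−}⁻ = 0 and β(g_{p₊,+}⁻ + g_{p₋,−}) + h_{p₊−1,+}⁻ − h_{p₋−1,−} = 0 on ℤ, then the sequence g_{p₊,+} − g_{p₋,−} is a lattice constant, that is, g_{p₊,+}(n) − g_{p₋,−}(n) = g_{p₊,+}(n−1) − g_{p₋,−}(n−1) for all n ∈ ℤ. -/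
/-- If `(α, β)` satisfies the `p`-th stationary Ablowitz–Ladik system (with
`p₋, p₊ ∈ ℕ`) and `α(n)β(n) ≠ 1` on `ℤ`, then the sequence `g_{p₊,+} − g_{p₋,−}`
is a lattice constant. -/
theorem g_difference_lattice_constant (α β : ℤ → ℂ) (c0p c0m : ℂ)
    (fp gp hp fm gm hm : ℕ → ℤ → ℂ)
    (h : ALRecursion α β c0p c0m fp gp hp fm gm hm)
    (pm pp : ℕ) (hpm : 1 ≤ pm) (hpp : 1 ≤ pp)
    (hab : ∀ n : ℤ, α n * β n ≠ 1)
    (heq1 : ∀ n : ℤ,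
      -(α n) * (gp pp n + gm pm (n - 1)) + fp (pp - 1) n - fm (pm - 1) (n - 1) = 0)
    (heq2 : ∀ n : ℤ,
      β n * (gp pp (n - 1) + gm pm n) + hp (pp - 1) (n - 1) - hm (pm - 1) n = 0) :
    ∀ n : ℤ, gp pp n - gm pm n = gp pp (n - 1) - gm pm (n - 1) := by
  obtain ⟨P, rfl⟩ : ∃ P, pp = P + 1 := ⟨pp - 1, (Nat.succ_pred_eq_of_pos hpp).symm⟩
  obtain ⟨M, rfl⟩ : ∃ M, pm = M + 1 := ⟨pm - 1, (Nat.succ_pred_eq_of_pos hpm).symm⟩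
  intro n
  have h1 := h.plus.g_step P n
  have h2 := h.minus.g_step M n
  have e1 := heq1 n
  have e2 := heq2 n
  simp only [Nat.add_sub_cancel] at e1 e2
  have hne : (1 : ℂ) - α n * β n ≠ 0 := sub_ne_zero.mpr fun hc => hab n hc.symm
  have key : (1 - α n * β n) *
      ((gp (P + 1) n - gm (M + 1) n) - (gp (P + 1) (n - 1) - gm (M + 1) (n - 1))) = 0 := by
    linear_combination h1 - h2 + β n * e1 + α n * e2
  linear_combination (mul_eq_zero.mp key).resolve_left hne
end

section
/- Let z ∈ ℂ∖{0} and let α, β, F, G, H : ℤ → ℂ satisfy the stationary zero-curvature relations at z. Assume 1 − α(n)β(n) ≠ 0 for all n ∈ ℤ. Then the quantity R(n) := G(n)² − F(n)H(n) is a lattice constant: G(n)² − F(n)H(n) = G(n−1)² − F(n−1)H(n−1) for all n ∈ ℤ. -/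
/-- Given the stationary zero-curvature relations at `z ≠ 0` and `1 − αβ ≠ 0` on `ℤ`,
the quantity `R(n) = G(n)² − F(n)H(n)` is a lattice constant. -/
theorem R_lattice_constant (z : ℂ) (hz : z ≠ 0) (α β F G H : ℤ → ℂ)
    (h1 : ∀ n : ℤ, z * (G (n - 1) - G n) + z * β n * F n + α n * H (n - 1) = 0)
    (h2 : ∀ n : ℤ, z * β n * F (n - 1) + α n * H n - G n + G (n - 1) = 0)
    (h3 : ∀ n : ℤ, -F n + z * F (n - 1) + α n * (G n + G (n - 1)) = 0)
    (h4 : ∀ n : ℤ, z * β n * (G n + G (n - 1)) - z * H n + H (n - 1) = 0)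
    (hγ : ∀ n : ℤ, 1 - α n * β n ≠ 0) :
    ∀ n : ℤ, G n ^ 2 - F n * H n = G (n - 1) ^ 2 - F (n - 1) * H (n - 1) := by
  intro n
  linear_combination (-(G n + G (n - 1))) * h2 n + (H n) * h3 n + (F (n - 1)) * h4 n
end

section
/- Let z ∈ ℂ∖{0} and let α, β, F, G, H : ℤ → ℂ satisfy the stationary zero-curvature relations at z, with F(n) ≠ 0 for all n ∈ ℤ. Let w ∈ ℂ satisfy w² = G(n)² − F(n)H(n) for all n ∈ ℤ, and define φ(n) := (w + G(n))/F(n) and φ*(n) := (−w + G(n))/F(n). Then φ satisfies the Riccati-type equation α(n)φ(n)φ(n−1) − φ(n−1) + zφ(n) = zβ(n) for all n (and the same equation holds with φ replaced by φ*); moreover φ(n)φ*(n) = H(n)/F(n), φ(n) + φ*(n) = 2G(n)/F(n), φ(n) − φ*(n) = 2w/F(n), and whenever w − G(n) ≠ 0 one has φ(n) = −H(n)/(w − G(n)). -/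
/-- The meromorphic function `φ(n) = (w + G(n))/F(n)`. -/
noncomputable def phiP (F G : ℤ → ℂ) (w : ℂ) (n : ℤ) : ℂ := (w + G n) / F n

/-- The function on the other sheet, `φ*(n) = (−w + G(n))/F(n)`. -/
noncomputable def phiM (F G : ℤ → ℂ) (w : ℂ) (n : ℤ) : ℂ := (-w + G n) / F n

/-! After clearing denominators, `φφ* = H/F` and `φ = −H/(w − G)` are the curve equation
`w² = G² − FH`, and the Riccati equation is a linear combination of it with the second and third
zero-curvature relations. Since `φ*` is `φ` on the other sheet `w ↦ −w`, and the curve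
equation only involves `w²`, the Riccati equation for `φ*` is a special case of the one for `φ`. -/

section

variable {F G : ℤ → ℂ} {w : ℂ}

theorem phiM_eq_phiP_neg : phiM F G w = phiP F G (-w) := rfl

theorem phiP_riccati {z : ℂ} {α β H : ℤ → ℂ} {n : ℤ}
    (h2 : z * β n * F (n - 1) + α n * H n - G n + G (n - 1) = 0)
    (h3 : -F n + z * F (n - 1) + α n * (G n + G (n - 1)) = 0)
    (hF : F n ≠ 0) (hF' : F (n - 1) ≠ 0) (hw : w ^ 2 = G n ^ 2 - F n * H n) :
    α n * phiP F G w n * phiP F G w (n - 1) - phiP F G w (n - 1) + z * phiP F G w n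
      = z * β n := by
  unfold phiP
  field_simp
  linear_combination α n * hw + (w + G n) * h3 - F n * h2

theorem phiP_mul_phiM {H : ℤ → ℂ} {n : ℤ} (hF : F n ≠ 0) (hw : w ^ 2 = G n ^ 2 - F n * H n) :
    phiP F G w n * phiM F G w n = H n / F n := by
  unfold phiP phiM
  field_simp
  linear_combination -hw

theorem phiP_add_phiM (n : ℤ) : phiP F G w n + phiM F G w n = 2 * G n / F n := by
  rw [phiP, phiM, ← add_div]
  ring

theorem phiP_sub_phiM (n : ℤ) : phiP F G w n - phiM F G w n = 2 * w / F n := by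
  rw [phiP, phiM, ← sub_div]
  ring

theorem phiP_eq_neg_div {H : ℤ → ℂ} {n : ℤ} (hF : F n ≠ 0) (hw : w ^ 2 = G n ^ 2 - F n * H n)
    (hwG : w - G n ≠ 0) : phiP F G w n = -H n / (w - G n) := by
  rw [phiP, div_eq_div_iff hF hwG]
  linear_combination hw

end

theorem phi_identities_general (z : ℂ) (α β F G H : ℤ → ℂ)
    (h2 : ∀ n : ℤ, z * β n * F (n - 1) + α n * H n - G n + G (n - 1) = 0)
    (h3 : ∀ n : ℤ, -F n + z * F (n - 1) + α n * (G n + G (n - 1)) = 0)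
    (hF : ∀ n : ℤ, F n ≠ 0) (w : ℂ)
    (hw : ∀ n : ℤ, w ^ 2 = G n ^ 2 - F n * H n) :
    (∀ n : ℤ, α n * phiP F G w n * phiP F G w (n - 1) - phiP F G w (n - 1)
        + z * phiP F G w n = z * β n)
    ∧ (∀ n : ℤ, α n * phiM F G w n * phiM F G w (n - 1) - phiM F G w (n - 1)
        + z * phiM F G w n = z * β n)
    ∧ (∀ n : ℤ, phiP F G w n * phiM F G w n = H n / F n)
    ∧ (∀ n : ℤ, phiP F G w n + phiM F G w n = 2 * G n / F n)
    ∧ (∀ n : ℤ, phiP F G w n - phiM F G w n = 2 * w / F n)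
    ∧ (∀ n : ℤ, w - G n ≠ 0 → phiP F G w n = -H n / (w - G n)) := by
  refine ⟨fun n => phiP_riccati (h2 n) (h3 n) (hF n) (hF (n - 1)) (hw n),
    fun n => ?_, fun n => phiP_mul_phiM (hF n) (hw n), phiP_add_phiM, phiP_sub_phiM,
    fun n => phiP_eq_neg_div (hF n) (hw n)⟩
  rw [phiM_eq_phiP_neg]
  exact phiP_riccati (h2 n) (h3 n) (hF n) (hF (n - 1)) (by rw [neg_sq]; exact hw n)

/-- Properties of the fundamental meromorphic function `φ`: the Riccati-type
equation `αφφ⁻ − φ⁻ + zφ = zβ` (for `φ` and for `φ*`), together with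
`φφ* = H/F`, `φ + φ* = 2G/F`, `φ − φ* = 2w/F`, and the alternative
representation `φ = −H/(w − G)` whenever `w − G ≠ 0`. -/
theorem phi_identities (z : ℂ) (hz : z ≠ 0) (α β F G H : ℤ → ℂ)
    (h1 : ∀ n : ℤ, z * (G (n - 1) - G n) + z * β n * F n + α n * H (n - 1) = 0)
    (h2 : ∀ n : ℤ, z * β n * F (n - 1) + α n * H n - G n + G (n - 1) = 0)
    (h3 : ∀ n : ℤ, -F n + z * F (n - 1) + α n * (G n + G (n - 1)) = 0)
    (h4 : ∀ n : ℤ, z * β n * (G n + G (n - 1)) - z * H n + H (n - 1) = 0)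
    (hF : ∀ n : ℤ, F n ≠ 0) (w : ℂ)
    (hw : ∀ n : ℤ, w ^ 2 = G n ^ 2 - F n * H n) :
    (∀ n : ℤ, α n * phiP F G w n * phiP F G w (n - 1) - phiP F G w (n - 1)
        + z * phiP F G w n = z * β n)
    ∧ (∀ n : ℤ, α n * phiM F G w n * phiM F G w (n - 1) - phiM F G w (n - 1)
        + z * phiM F G w n = z * β n)
    ∧ (∀ n : ℤ, phiP F G w n * phiM F G w n = H n / F n)
    ∧ (∀ n : ℤ, phiP F G w n + phiM F G w n = 2 * G n / F n)
    ∧ (∀ n : ℤ, phiP F G w n - phiM F G w n = 2 * w / F n)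
    ∧ (∀ n : ℤ, w - G n ≠ 0 → phiP F G w n = -H n / (w - G n)) :=
  phi_identities_general z α β F G H h2 h3 hF w hw
end

section
/- Suppose the families f_{ℓ,±}, g_{ℓ,±}, h_{ℓ,±} satisfy the Ablowitz–Ladik recursion for (α, β), let p₋, p₊ ∈ ℕ and set p := p₋ + p₊ − 1, and define the Laurent polynomials F_p and H_p. Fix n ∈ ℤ and suppose μ₁(n), …, μ_p(n) ∈ ℂ and ν₁(n), …, ν_p(n) ∈ ℂ satisfy, for all z ∈ ℂ∖{0}: z^{p₋} F_p(z,n) = −c₀,₊ α⁺(n) Π_{j=1}^{p} (z − μ_j(n)) and z^{p₋−1} H_p(z,n) = c₀,₊ β(n) Π_{j=1}^{p} (z − ν_j(n)). Then the trace formulas c₀,₋ α(n) = (−1)^{p+1} c₀,₊ α⁺(n) Π_{j=1}^{p} μ_j(n) and c₀,₋ β⁺(n) = (−1)^{p+1} c₀,₊ β(n) Π_{j=1}^{p} ν_j(n) hold. -/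
private lemma ext_at_zero (F G : ℂ → ℂ) (hF : Continuous F) (hG : Continuous G)
    (hFG : ∀ z : ℂ, z ≠ 0 → F z = G z) : F 0 = G 0 := by
  have : F = G := Continuous.ext_on (dense_compl_singleton (0 : ℂ)) hF hG
    (fun z hz => hFG z hz)
  rw [this]

private lemma prod_zero_sub {m : ℕ} (μ : Fin m → ℂ) :
    ∏ j, ((0 : ℂ) - μ j) = (-1 : ℂ) ^ m * ∏ j, μ j := by
  simp only [zero_sub]
  rw [show (fun j => -μ j) = fun j => (-1 : ℂ) * μ j from funext fun j => by ring]
  rw [Finset.prod_mul_distrib, Finset.prod_const]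
  simp

/-- Trace formulas relating `α, β` to the zeros `μ_j` of `z^{p₋}F_p(·,n)` and
`ν_j` of `z^{p₋−1}H_p(·,n)`:
`c₀,₋ α(n) = (−1)^{p+1} c₀,₊ α⁺(n) Π_j μ_j(n)` and
`c₀,₋ β⁺(n) = (−1)^{p+1} c₀,₊ β(n) Π_j ν_j(n)`, where `p = p₋ + p₊ − 1`. -/
theorem trace_formulas (α β : ℤ → ℂ) (c0p c0m : ℂ)
    (fp gp hp fm gm hm : ℕ → ℤ → ℂ)
    (h : ALRecursion α β c0p c0m fp gp hp fm gm hm)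
    (pm pp : ℕ) (hpm : 1 ≤ pm) (hpp : 1 ≤ pp) (n : ℤ)
    (μ ν : Fin (pm + pp - 1) → ℂ)
    (hμ : ∀ z : ℂ, z ≠ 0 →
      (z : ℂ) ^ pm * FLaurent fm fp pm pp z n
        = -(c0p * α (n + 1)) * ∏ j, (z - μ j))
    (hν : ∀ z : ℂ, z ≠ 0 →
      (z : ℂ) ^ (pm - 1) * HLaurent hm hp pm pp z n
        = c0p * β n * ∏ j, (z - ν j)) :
    c0m * α n = (-1 : ℂ) ^ (pm + pp - 1 + 1) * c0p * α (n + 1) * ∏ j, μ j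
    ∧ c0m * β (n + 1) = (-1 : ℂ) ^ (pm + pp - 1 + 1) * c0p * β n * ∏ j, ν j := by
  have key1 : fm 0 n = -(c0p * α (n + 1)) * ∏ j, ((0 : ℂ) - μ j) := by
    have hF : Continuous (fun z : ℂ =>
        (∑ ℓ ∈ Finset.Icc 1 pm, fm (pm - ℓ) n * z ^ (pm - ℓ))
          + ∑ ℓ ∈ Finset.range pp, fp (pp - 1 - ℓ) n * z ^ (pm + ℓ)) :=
      Continuous.add
        (continuous_finset_sum _ fun ℓ _ => continuous_const.mul (continuous_pow _))
        (continuous_finset_sum _ fun ℓ _ => continuous_const.mul (continuous_pow _))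
    have hG : Continuous (fun z : ℂ => -(c0p * α (n + 1)) * ∏ j, (z - μ j)) :=
      continuous_const.mul
        (continuous_finset_prod _ fun j _ => continuous_id.sub continuous_const)
    have heq := ext_at_zero _ _ hF hG (by
      intro z hz
      rw [← hμ z hz]
      simp only [FLaurent, mul_add, Finset.mul_sum]
      congr 1
      · refine Finset.sum_congr rfl fun ℓ hℓ => ?_
        have hℓ' : ℓ ≤ pm := (Finset.mem_Icc.mp hℓ).2
        rw [mul_left_comm]
        congr 1
        rw [← zpow_natCast z pm, ← zpow_add₀ hz, ← zpow_natCast z (pm - ℓ)]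
        congr 1
        push_cast [Nat.cast_sub hℓ']
        ring
      · refine Finset.sum_congr rfl fun ℓ _ => ?_
        rw [mul_left_comm]
        congr 1
        rw [zpow_natCast, ← pow_add])
    have h2 : ∑ ℓ ∈ Finset.range pp, fp (pp - 1 - ℓ) n * (0 : ℂ) ^ (pm + ℓ) = 0 :=
      Finset.sum_eq_zero fun ℓ _ => by
        rw [zero_pow (by omega : pm + ℓ ≠ 0), mul_zero]
    have h1 : ∑ ℓ ∈ Finset.Icc 1 pm, fm (pm - ℓ) n * (0 : ℂ) ^ (pm - ℓ)
        = fm 0 n := by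
      rw [Finset.sum_eq_single pm]
      · simp
      · intro ℓ hℓ hne
        have : ℓ < pm := lt_of_le_of_ne (Finset.mem_Icc.mp hℓ).2 hne
        rw [zero_pow (by omega : pm - ℓ ≠ 0), mul_zero]
      · intro hc
        exact absurd (Finset.mem_Icc.mpr ⟨hpm, le_refl pm⟩) hc
    rw [← h1]
    calc _ = ∑ ℓ ∈ Finset.Icc 1 pm, fm (pm - ℓ) n * (0 : ℂ) ^ (pm - ℓ)
          + ∑ ℓ ∈ Finset.range pp, fp (pp - 1 - ℓ) n * (0 : ℂ) ^ (pm + ℓ) := by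
            rw [h2, add_zero]
      _ = _ := heq
  have key2 : hm 0 n = c0p * β n * ∏ j, ((0 : ℂ) - ν j) := by
    have hF : Continuous (fun z : ℂ =>
        (∑ ℓ ∈ Finset.range pm, hm (pm - 1 - ℓ) n * z ^ (pm - 1 - ℓ))
          + ∑ ℓ ∈ Finset.Icc 1 pp, hp (pp - ℓ) n * z ^ (pm - 1 + ℓ)) :=
      Continuous.add
        (continuous_finset_sum _ fun ℓ _ => continuous_const.mul (continuous_pow _))
        (continuous_finset_sum _ fun ℓ _ => continuous_const.mul (continuous_pow _))
    have hG : Continuous (fun z : ℂ => c0p * β n * ∏ j, (z - ν j)) :=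
      continuous_const.mul
        (continuous_finset_prod _ fun j _ => continuous_id.sub continuous_const)
    have heq := ext_at_zero _ _ hF hG (by
      intro z hz
      rw [← hν z hz]
      simp only [HLaurent, mul_add, Finset.mul_sum]
      congr 1
      · refine Finset.sum_congr rfl fun ℓ hℓ => ?_
        have hℓ' : ℓ < pm := Finset.mem_range.mp hℓ
        rw [mul_left_comm]
        congr 1
        rw [← zpow_natCast z (pm - 1), ← zpow_add₀ hz, ← zpow_natCast z (pm - 1 - ℓ)]
        congr 1
        push_cast [Nat.cast_sub (by omega : ℓ ≤ pm - 1), Nat.cast_sub hpm]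
        ring
      · refine Finset.sum_congr rfl fun ℓ _ => ?_
        rw [mul_left_comm]
        congr 1
        rw [zpow_natCast, ← pow_add])
    have h2 : ∑ ℓ ∈ Finset.Icc 1 pp, hp (pp - ℓ) n * (0 : ℂ) ^ (pm - 1 + ℓ) = 0 :=
      Finset.sum_eq_zero fun ℓ hℓ => by
        have : 1 ≤ ℓ := (Finset.mem_Icc.mp hℓ).1
        rw [zero_pow (by omega : pm - 1 + ℓ ≠ 0), mul_zero]
    have h1 : ∑ ℓ ∈ Finset.range pm, hm (pm - 1 - ℓ) n * (0 : ℂ) ^ (pm - 1 - ℓ)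
        = hm 0 n := by
      rw [Finset.sum_eq_single (pm - 1)]
      · simp
      · intro ℓ hℓ hne
        have : ℓ < pm := Finset.mem_range.mp hℓ
        rw [zero_pow (by omega : pm - 1 - ℓ ≠ 0), mul_zero]
      · intro hc
        exact absurd (Finset.mem_range.mpr (by omega)) hc
    rw [← h1]
    calc _ = ∑ ℓ ∈ Finset.range pm, hm (pm - 1 - ℓ) n * (0 : ℂ) ^ (pm - 1 - ℓ)
          + ∑ ℓ ∈ Finset.Icc 1 pp, hp (pp - ℓ) n * (0 : ℂ) ^ (pm - 1 + ℓ) := by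
            rw [h2, add_zero]
      _ = _ := heq
  rw [prod_zero_sub] at key1 key2
  rw [h.minus.f0] at key1
  rw [h.minus.h0] at key2
  constructor
  · rw [key1]; ring
  · have := neg_eq_iff_eq_neg.mp key2
    rw [this]; ring
end

section
/- Suppose the families f_{ℓ,±}, g_{ℓ,±}, h_{ℓ,±} satisfy the Ablowitz–Ladik recursion for (α, β) with c₀,₊ ≠ 0, assume α(n) ≠ 0 and β(n) ≠ 0 for all n, let p₋ ∈ ℕ and p₊ ∈ ℕ with p₊ ≥ 2, and set p := p₋ + p₊ − 1 and γ := 1 − αβ. Assume moreover that there is a constant c₁,₊ ∈ ℂ such that g_{1,+}(n) = −c₀,₊ α⁺(n)β(n) + c₁,₊/2 for all n. Fix n ∈ ℤ and suppose μ₁(n), …, μ_p(n), ν₁(n), …, ν_p(n) ∈ ℂ satisfy, for all z ∈ ℂ∖{0}: z^{p₋} F_p(z,n) = −c₀,₊ α⁺(n) Π_{j=1}^{p} (z − μ_j(n)) and z^{p₋−1} H_p(z,n) = c₀,₊ β(n) Π_{j=1}^{p} (z − ν_j(n)). Then Σ_{j=1}^{p} μ_j(n) = α⁺(n)β(n) −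 γ⁺(n) α⁺⁺(n)/α⁺(n) − c₁,₊/c₀,₊ and Σ_{j=1}^{p} ν_j(n) = α⁺(n)β(n) − γ(n) β⁻(n)/β(n) − c₁,₊/c₀,₊. -/
open Polynomial in
lemma aux_coeff {N : ℕ} (hN : 1 ≤ N) (a : ℂ) (μ : Fin N → ℂ) :
    (Polynomial.C a * ∏ j, (Polynomial.X - Polynomial.C (μ j))).coeff (N - 1)
      = -(a * ∑ j, μ j) := by
  have hdeg : (∏ j, (X - C (μ j)) : ℂ[X]).natDegree = N := by
    rw [Polynomial.natDegree_prod]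
    · simp
    · intro i _; exact X_sub_C_ne_zero _
  have hnc := Polynomial.prod_X_sub_C_nextCoeff (s := (Finset.univ : Finset (Fin N))) μ
  rw [Polynomial.nextCoeff, hdeg, if_neg (by omega)] at hnc
  rw [Polynomial.coeff_C_mul, hnc]
  ring

open Polynomial in
lemma aux_eq_poly (P Q : ℂ[X]) (hev : ∀ z : ℂ, z ≠ 0 → P.eval z = Q.eval z) : P = Q := by
  apply Polynomial.eq_of_infinite_eval_eq
  apply Set.Infinite.mono (s := ({0}ᶜ : Set ℂ))
  · intro z hz; exact hev z hz
  · exact (Set.finite_singleton 0).infinite_compl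

open Polynomial

/-- Trace formulas for the sums of the zeros `μ_j` of `z^{p₋}F_p(·,n)` and `ν_j` of
`z^{p₋−1}H_p(·,n)`:
`Σ_j μ_j = α⁺β − γ⁺ α⁺⁺/α⁺ − c₁,₊/c₀,₊` and `Σ_j ν_j = α⁺β − γ β⁻/β − c₁,₊/c₀,₊`,
where `γ = 1 − αβ` and `p = p₋ + p₊ − 1`. -/
theorem trace_formulas_sums (α β : ℤ → ℂ) (c0p c0m : ℂ) (hc0p : c0p ≠ 0)
    (fp gp hp fm gm hm : ℕ → ℤ → ℂ)
    (h : ALRecursion α β c0p c0m fp gp hp fm gm hm)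
    (hα : ∀ n : ℤ, α n ≠ 0) (hβ : ∀ n : ℤ, β n ≠ 0)
    (pm pp : ℕ) (hpm : 1 ≤ pm) (hpp : 2 ≤ pp)
    (c1p : ℂ) (hg1 : ∀ n : ℤ, gp 1 n = -(c0p * α (n + 1) * β n) + c1p / 2)
    (n : ℤ) (μ ν : Fin (pm + pp - 1) → ℂ)
    (hμ : ∀ z : ℂ, z ≠ 0 →
      (z : ℂ) ^ pm * FLaurent fm fp pm pp z n
        = -(c0p * α (n + 1)) * ∏ j, (z - μ j))
    (hν : ∀ z : ℂ, z ≠ 0 →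
      (z : ℂ) ^ (pm - 1) * HLaurent hm hp pm pp z n
        = c0p * β n * ∏ j, (z - ν j)) :
    (∑ j, μ j) = α (n + 1) * β n
        - (1 - α (n + 1) * β (n + 1)) * α (n + 2) / α (n + 1) - c1p / c0p
    ∧ (∑ j, ν j) = α (n + 1) * β n
        - (1 - α n * β n) * β (n - 1) / β n - c1p / c0p := by
  classical
  -- Step 1: extract `fp 1 n` and `hp 1 n` from the polynomial identities.
  have key1 : fp 1 n = c0p * α (n + 1) * ∑ j, μ j := by
    set P : ℂ[X] := (∑ ℓ ∈ Finset.Icc 1 pm, C (fm (pm - ℓ) n) * X ^ (pm - ℓ))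
        + ∑ ℓ ∈ Finset.range pp, C (fp (pp - 1 - ℓ) n) * X ^ (pm + ℓ) with hP
    set Q : ℂ[X] := C (-(c0p * α (n + 1))) * ∏ j, (X - C (μ j)) with hQ
    have hPQ : P = Q := by
      apply aux_eq_poly
      intro z hz
      have hev : P.eval z = z ^ pm * FLaurent fm fp pm pp z n := by
        rw [hP, FLaurent]
        simp only [eval_add, eval_finset_sum, eval_mul, eval_C, eval_pow, eval_X, mul_add,
          Finset.mul_sum]
        congr 1
        · apply Finset.sum_congr rfl
          intro ℓ hℓ
          simp only [Finset.mem_Icc] at hℓ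
          have : (z : ℂ) ^ pm * z ^ (-(ℓ : ℤ)) = z ^ (pm - ℓ) := by
            rw [← zpow_natCast z pm, ← zpow_add₀ hz, ← zpow_natCast z (pm - ℓ)]
            congr 1
            omega
          rw [← this]; ring
        · apply Finset.sum_congr rfl
          intro ℓ _
          rw [pow_add, zpow_natCast]; ring
      rw [hev, hμ z hz, hQ]
      simp [Polynomial.eval_prod]
    have hc1 : P.coeff (pm + pp - 1 - 1) = fp 1 n := by
      rw [hP]
      simp only [Polynomial.finset_sum_coeff, Polynomial.coeff_add, Polynomial.coeff_C_mul,
        Polynomial.coeff_X_pow]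
      rw [Finset.sum_eq_zero, Finset.sum_eq_single (pp - 2)]
      · rw [if_pos (by omega)]
        have : pp - 1 - (pp - 2) = 1 := by omega
        rw [this]; ring
      · intro b hb hbne
        rw [if_neg (by simp only [Finset.mem_range] at hb; omega)]; ring
      · intro hmem
        simp only [Finset.mem_range] at hmem; omega
      · intro ℓ hℓ
        simp only [Finset.mem_Icc] at hℓ
        rw [if_neg (by omega)]; ring
    have hc2 : Q.coeff (pm + pp - 1 - 1) = c0p * α (n + 1) * ∑ j, μ j := by
      rw [hQ, aux_coeff (by omega)]
      ring
    rw [← hc1, hPQ, hc2]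
  have key2 : hp 1 n = -(c0p * β n * ∑ j, ν j) := by
    set P : ℂ[X] := (∑ ℓ ∈ Finset.range pm, C (hm (pm - 1 - ℓ) n) * X ^ (pm - 1 - ℓ))
        + ∑ ℓ ∈ Finset.Icc 1 pp, C (hp (pp - ℓ) n) * X ^ (pm - 1 + ℓ) with hP
    set Q : ℂ[X] := C (c0p * β n) * ∏ j, (X - C (ν j)) with hQ
    have hPQ : P = Q := by
      apply aux_eq_poly
      intro z hz
      have hev : P.eval z = z ^ (pm - 1) * HLaurent hm hp pm pp z n := by
        rw [hP, HLaurent]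
        simp only [eval_add, eval_finset_sum, eval_mul, eval_C, eval_pow, eval_X, mul_add,
          Finset.mul_sum]
        congr 1
        · apply Finset.sum_congr rfl
          intro ℓ hℓ
          simp only [Finset.mem_range] at hℓ
          have : (z : ℂ) ^ (pm - 1) * z ^ (-(ℓ : ℤ)) = z ^ (pm - 1 - ℓ) := by
            rw [← zpow_natCast z (pm - 1), ← zpow_add₀ hz, ← zpow_natCast z (pm - 1 - ℓ)]
            congr 1
            omega
          rw [← this]; ring
        · apply Finset.sum_congr rfl
          intro ℓ _
          rw [pow_add, zpow_natCast]; ring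
      rw [hev, hν z hz, hQ]
      simp [Polynomial.eval_prod]
    have hc1 : P.coeff (pm + pp - 1 - 1) = hp 1 n := by
      rw [hP]
      simp only [Polynomial.finset_sum_coeff, Polynomial.coeff_add, Polynomial.coeff_C_mul,
        Polynomial.coeff_X_pow]
      rw [Finset.sum_eq_zero, Finset.sum_eq_single (pp - 1)]
      · rw [if_pos (by omega)]
        have : pp - (pp - 1) = 1 := by omega
        rw [this]; ring
      · intro b hb hbne
        rw [if_neg (by simp only [Finset.mem_Icc] at hb; omega)]; ring
      · intro hmem
        simp only [Finset.mem_Icc] at hmem; omega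
      · intro ℓ hℓ
        simp only [Finset.mem_range] at hℓ
        rw [if_neg (by omega)]; ring
    have hc2 : Q.coeff (pm + pp - 1 - 1) = -(c0p * β n * ∑ j, ν j) := by
      rw [hQ, aux_coeff (by omega)]
    rw [← hc1, hPQ, hc2]
  -- Step 2: compute `fp 1 n` and `hp 1 n` from the recursion.
  have hn1 : n + 1 - 1 = n := by ring
  have hn2 : n + 1 + 1 = n + 2 := by ring
  have hn3 : n - 1 + 1 = n := by ring
  have efp : fp 1 n = -(c0p * α (n + 2))
      - α (n + 1) * ((-(c0p * α (n + 2) * β (n + 1)) + c1p / 2)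
        + (-(c0p * α (n + 1) * β n) + c1p / 2)) := by
    have e := h.plus.f_step 0 (n + 1)
    rw [hn1] at e
    rw [e, h.plus.f0, hg1, hg1, hn2]
  have ehp : hp 1 n = c0p * β (n - 1)
      + β n * ((-(c0p * α (n + 1) * β n) + c1p / 2)
        + (-(c0p * α n * β (n - 1)) + c1p / 2)) := by
    have e := h.plus.h_step 0 n
    rw [e, h.plus.h0, hg1, hg1, hn3]
  -- Step 3: algebra.
  have hA : α (n + 1) ≠ 0 := hα _
  have hB : β n ≠ 0 := hβ _
  rw [efp] at key1
  rw [ehp] at key2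
  constructor
  · field_simp
    linear_combination -key1
  · field_simp
    linear_combination key2
end

section
/- Suppose the families f_{ℓ,±}, g_{ℓ,±}, h_{ℓ,±} satisfy the Ablowitz–Ladik recursion for (α, β) with c₀,₊ ≠ 0, let p₋, p₊ ∈ ℕ, set p := p₋ + p₊ − 1, and define the Laurent polynomials F_p, G_p, H_p. Fix n ∈ ℤ and suppose E₀, …, E_{2p+1} ∈ ℂ satisfy G_p(z,n)² − F_p(z,n)H_p(z,n) = (c₀,₊²/4)·z^{−2p₋}·Π_{m=0}^{2p+1}(z − E_m) for all z ∈ ℂ∖{0}. Then Π_{m=0}^{2p+1} E_m = c₀,₋²/c₀,₊². -/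
/-- If `G_p² − F_p H_p = (c₀,₊²/4) z^{−2p₋} Π_{m=0}^{2p+1}(z − E_m)` for all
`z ∈ ℂ∖{0}`, where `p = p₋ + p₊ − 1`, then `Π_{m=0}^{2p+1} E_m = c₀,₋²/c₀,₊²`. -/
theorem prod_of_branch_points (α β : ℤ → ℂ) (c0p c0m : ℂ) (hc0p : c0p ≠ 0)
    (fp gp hp fm gm hm : ℕ → ℤ → ℂ)
    (h : ALRecursion α β c0p c0m fp gp hp fm gm hm)
    (pm pp : ℕ) (hpm : 1 ≤ pm) (hpp : 1 ≤ pp) (n : ℤ)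
    (E : Fin (2 * (pm + pp - 1) + 2) → ℂ)
    (hE : ∀ z : ℂ, z ≠ 0 →
      GLaurent gm gp pm pp z n ^ 2
          - FLaurent fm fp pm pp z n * HLaurent hm hp pm pp z n
        = c0p ^ 2 / 4 * z ^ (-(2 * (pm : ℤ))) * ∏ m, (z - E m)) :
    (∏ m, E m) = c0m ^ 2 / c0p ^ 2 := by
  -- auxiliary power manipulation
  have hzpow : ∀ (z : ℂ), z ≠ 0 → ∀ (a b : ℤ) (k : ℕ), a + b = (k : ℤ) →
      z ^ a * z ^ b = z ^ k := by
    intro z hz a b k hk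
    rw [← zpow_add₀ hz, hk, zpow_natCast]
  -- the "polynomialized" functions
  set Gq : ℂ → ℂ := fun z =>
    (∑ ℓ ∈ Finset.Icc 1 pm, gm (pm - ℓ) n * z ^ (pm - ℓ))
      + ∑ ℓ ∈ Finset.range (pp + 1), gp (pp - ℓ) n * z ^ (pm + ℓ) with hGq
  set Fq : ℂ → ℂ := fun z =>
    (∑ ℓ ∈ Finset.Icc 1 pm, fm (pm - ℓ) n * z ^ (pm - ℓ))
      + ∑ ℓ ∈ Finset.range pp, fp (pp - 1 - ℓ) n * z ^ (pm + ℓ) with hFq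
  set Hq : ℂ → ℂ := fun z =>
    (∑ ℓ ∈ Finset.range pm, hm (pm - 1 - ℓ) n * z ^ (pm - ℓ))
      + ∑ ℓ ∈ Finset.Icc 1 pp, hp (pp - ℓ) n * z ^ (pm + ℓ) with hHq
  have hGmul : ∀ z : ℂ, z ≠ 0 → z ^ pm * GLaurent gm gp pm pp z n = Gq z := by
    intro z hz
    simp only [hGq, GLaurent, mul_add, Finset.mul_sum]
    congr 1
    · refine Finset.sum_congr rfl fun ℓ hℓ => ?_
      have hℓpm : ℓ ≤ pm := (Finset.mem_Icc.mp hℓ).2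
      rw [mul_left_comm, ← zpow_natCast z pm,
        hzpow z hz (pm : ℤ) (-(ℓ : ℤ)) (pm - ℓ) (by omega)]
    · refine Finset.sum_congr rfl fun ℓ hℓ => ?_
      rw [mul_left_comm, ← zpow_natCast z pm,
        hzpow z hz (pm : ℤ) (ℓ : ℤ) (pm + ℓ) (by omega)]
  have hFmul : ∀ z : ℂ, z ≠ 0 → z ^ pm * FLaurent fm fp pm pp z n = Fq z := by
    intro z hz
    simp only [hFq, FLaurent, mul_add, Finset.mul_sum]
    congr 1
    · refine Finset.sum_congr rfl fun ℓ hℓ => ?_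
      have hℓpm : ℓ ≤ pm := (Finset.mem_Icc.mp hℓ).2
      rw [mul_left_comm, ← zpow_natCast z pm,
        hzpow z hz (pm : ℤ) (-(ℓ : ℤ)) (pm - ℓ) (by omega)]
    · refine Finset.sum_congr rfl fun ℓ hℓ => ?_
      rw [mul_left_comm, ← zpow_natCast z pm,
        hzpow z hz (pm : ℤ) (ℓ : ℤ) (pm + ℓ) (by omega)]
  have hHmul : ∀ z : ℂ, z ≠ 0 → z ^ pm * HLaurent hm hp pm pp z n = Hq z := by
    intro z hz
    simp only [hHq, HLaurent, mul_add, Finset.mul_sum]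
    congr 1
    · refine Finset.sum_congr rfl fun ℓ hℓ => ?_
      have hℓpm : ℓ < pm := Finset.mem_range.mp hℓ
      rw [mul_left_comm, ← zpow_natCast z pm,
        hzpow z hz (pm : ℤ) (-(ℓ : ℤ)) (pm - ℓ) (by omega)]
    · refine Finset.sum_congr rfl fun ℓ hℓ => ?_
      rw [mul_left_comm, ← zpow_natCast z pm,
        hzpow z hz (pm : ℤ) (ℓ : ℤ) (pm + ℓ) (by omega)]
  -- the key polynomial identity away from 0
  have key : ∀ z : ℂ, z ≠ 0 →
      Gq z ^ 2 - Fq z * Hq z = c0p ^ 2 / 4 * ∏ m, (z - E m) := by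
    intro z hz
    have h1 := hE z hz
    have h2 : z ^ (2 * pm) * (GLaurent gm gp pm pp z n ^ 2
        - FLaurent fm fp pm pp z n * HLaurent hm hp pm pp z n)
        = Gq z ^ 2 - Fq z * Hq z := by
      rw [← hGmul z hz, ← hFmul z hz, ← hHmul z hz]
      ring
    have h3 : z ^ (2 * pm) * (c0p ^ 2 / 4 * z ^ (-(2 * (pm : ℤ))) * ∏ m, (z - E m))
        = c0p ^ 2 / 4 * ∏ m, (z - E m) := by
      have : z ^ (2 * pm) * z ^ (-(2 * (pm : ℤ))) = 1 := by
        rw [← zpow_natCast z (2 * pm), ← zpow_add₀ hz]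
        norm_num
      calc z ^ (2 * pm) * (c0p ^ 2 / 4 * z ^ (-(2 * (pm : ℤ))) * ∏ m, (z - E m))
          = (z ^ (2 * pm) * z ^ (-(2 * (pm : ℤ)))) * (c0p ^ 2 / 4 * ∏ m, (z - E m)) := by
            ring
        _ = c0p ^ 2 / 4 * ∏ m, (z - E m) := by rw [this, one_mul]
    rw [← h2, h1, h3]
  -- extend by continuity to z = 0
  have hcont1 : Continuous fun z : ℂ => Gq z ^ 2 - Fq z * Hq z := by
    simp only [hGq, hFq, hHq]
    fun_prop
  have hcont2 : Continuous fun z : ℂ => c0p ^ 2 / 4 * ∏ m, (z - E m) := by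
    apply Continuous.mul continuous_const
    exact continuous_finset_prod _ fun i _ => by fun_prop
  have heq : (fun z : ℂ => Gq z ^ 2 - Fq z * Hq z)
      = fun z : ℂ => c0p ^ 2 / 4 * ∏ m, (z - E m) :=
    Continuous.ext_on (dense_compl_singleton (0 : ℂ)) hcont1 hcont2
      (fun z hz => key z hz)
  have h0 := congrFun heq 0
  -- evaluate at 0
  have hG0 : Gq 0 = c0m / 2 := by
    simp only [hGq]
    rw [Finset.sum_eq_single pm, Finset.sum_eq_zero]
    · simp [h.minus.g0 n]
    · intro ℓ hℓ
      have : 0 < pm + ℓ := by omega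
      simp [zero_pow this.ne']
    · intro ℓ hℓ hne
      have hℓpm : ℓ ≤ pm := (Finset.mem_Icc.mp hℓ).2
      have : pm - ℓ ≠ 0 := by omega
      simp [zero_pow this]
    · intro hpmnot
      exact absurd (Finset.mem_Icc.mpr ⟨hpm, le_refl pm⟩) hpmnot
  have hH0 : Hq 0 = 0 := by
    simp only [hHq]
    rw [Finset.sum_eq_zero, Finset.sum_eq_zero, add_zero]
    · intro ℓ hℓ
      have hℓpp : 1 ≤ ℓ := (Finset.mem_Icc.mp hℓ).1
      have : pm + ℓ ≠ 0 := by omega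
      simp [zero_pow this]
    · intro ℓ hℓ
      have : ℓ < pm := Finset.mem_range.mp hℓ
      have : pm - ℓ ≠ 0 := by omega
      simp [zero_pow this]
  have hprod : (∏ m, ((0 : ℂ) - E m)) = ∏ m, E m := by
    have : ∀ m : Fin (2 * (pm + pp - 1) + 2), (0 : ℂ) - E m = -1 * E m := by
      intro m; ring
    rw [Finset.prod_congr rfl fun m _ => this m, Finset.prod_mul_distrib,
      Finset.prod_const, Finset.card_univ, Fintype.card_fin]
    have heven : Even (2 * (pm + pp - 1) + 2) := ⟨pm + pp - 1 + 1, by omega⟩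
    rw [heven.neg_one_pow, one_mul]
  rw [hG0, hH0, mul_zero, sub_zero, hprod] at h0
  have hfinal : c0m ^ 2 / 4 = c0p ^ 2 / 4 * ∏ m, E m := by
    rw [← h0]; ring
  field_simp at hfinal ⊢
  linear_combination -hfinal
end

section
/- Let α, β : ℤ × ℝ → ℂ be differentiable in t, let p₋, p₊ ∈ ℕ, and suppose that for each t ∈ ℝ the families f_{ℓ,±}(·,t), g_{ℓ,±}(·,t), h_{ℓ,±}(·,t) satisfy the Ablowitz–Ladik recursion for (α(·,t), β(·,t)). If (α, β) satisfies the p-th Ablowitz–Ladik system, i.e., −i∂ₜα − α(g_{p₊,+} + g_{p₋,−}⁻) + f_{p₊−1,+} − f_{p₋−1,−}⁻ = 0 and −i∂ₜβ + β(g_{p₊,+}⁻ + g_{p₋,−}) − h_{p₋−1,−} + h_{p₊−1,+}⁻ = 0 on ℤ × ℝ, then γ := 1 − αβ satisfies ∂ₜγ = iγ·((g_{p₊,+} − g_{p₊,+}⁻) − (g_{p₋,−} − g_{p₋,−}⁻)) on ℤ × ℝ. -/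
/- Substituting `∂ₜα` and `∂ₜβ` from the system into `∂ₜγ = −(β ∂ₜα + α ∂ₜβ)`, the terms containing
`f` and `h` are `i(β f_{p₊−1,+} + α h⁻_{p₊−1,+}) − i(β f⁻_{p₋−1,−} + α h_{p₋−1,−})`, which the
recursion at level `p − 1` turns into `i((g_{p₊,+} − g⁻_{p₊,+}) − (g_{p₋,−} − g⁻_{p₋,−}))`; the terms
containing `αβ` give the same difference of `g`'s times `−iαβ`. -/

theorem ALRecPlus.g_sub_g_sub_one {α β : ℤ → ℂ} {c : ℂ} {f g h : ℕ → ℤ → ℂ}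
    (hr : ALRecPlus α β c f g h) {p : ℕ} (hp : 1 ≤ p) (n : ℤ) :
    g p n - g p (n - 1) = α n * h (p - 1) (n - 1) + β n * f (p - 1) n := by
  obtain ⟨ℓ, rfl⟩ := Nat.exists_eq_add_of_le' hp
  exact hr.g_step ℓ n

theorem ALRecMinus.g_sub_g_sub_one {α β : ℤ → ℂ} {c : ℂ} {f g h : ℕ → ℤ → ℂ}
    (hr : ALRecMinus α β c f g h) {p : ℕ} (hp : 1 ≤ p) (n : ℤ) :
    g p n - g p (n - 1) = α n * h (p - 1) n + β n * f (p - 1) (n - 1) := by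
  obtain ⟨ℓ, rfl⟩ := Nat.exists_eq_add_of_le' hp
  exact hr.g_step ℓ n

/-- If `(α, β)` satisfies the `p`-th (time-dependent) Ablowitz–Ladik system, then
`γ = 1 − αβ` satisfies `∂ₜγ = iγ((g_{p₊,+} − g_{p₊,+}⁻) − (g_{p₋,−} − g_{p₋,−}⁻))`. -/
theorem gamma_time_derivative (α β αt βt : ℤ → ℝ → ℂ) (c0p c0m : ℂ)
    (fp gp hp fm gm hm : ℕ → ℤ → ℝ → ℂ)
    (hα : ∀ (n : ℤ) (t : ℝ), HasDerivAt (α n) (αt n t) t)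
    (hβ : ∀ (n : ℤ) (t : ℝ), HasDerivAt (β n) (βt n t) t)
    (hrec : ∀ t : ℝ, ALRecursion (fun n => α n t) (fun n => β n t) c0p c0m
      (fun ℓ n => fp ℓ n t) (fun ℓ n => gp ℓ n t) (fun ℓ n => hp ℓ n t)
      (fun ℓ n => fm ℓ n t) (fun ℓ n => gm ℓ n t) (fun ℓ n => hm ℓ n t))
    (pm pp : ℕ) (hpm : 1 ≤ pm) (hpp : 1 ≤ pp)
    (heq1 : ∀ (n : ℤ) (t : ℝ),
      -Complex.I * αt n t - α n t * (gp pp n t + gm pm (n - 1) t)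
        + fp (pp - 1) n t - fm (pm - 1) (n - 1) t = 0)
    (heq2 : ∀ (n : ℤ) (t : ℝ),
      -Complex.I * βt n t + β n t * (gp pp (n - 1) t + gm pm n t)
        - hm (pm - 1) n t + hp (pp - 1) (n - 1) t = 0) :
    ∀ (n : ℤ) (t : ℝ),
      HasDerivAt (fun s => 1 - α n s * β n s)
        (Complex.I * (1 - α n t * β n t)
          * ((gp pp n t - gp pp (n - 1) t) - (gm pm n t - gm pm (n - 1) t))) t := by
  intro n t
  have hγ := ((hα n t).mul (hβ n t)).const_sub 1
  have hgp := (hrec t).plus.g_sub_g_sub_one hpp n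
  have hgm := (hrec t).minus.g_sub_g_sub_one hpm n
  refine hγ.congr_deriv ?_
  linear_combination -(β n t * Complex.I) * heq1 n t - (α n t * Complex.I) * heq2 n t
    - Complex.I * hgp + Complex.I * hgm
    - (β n t * αt n t + α n t * βt n t) * Complex.I_mul_I
end

section
/- Suppose the families f_{ℓ,+}, g_{ℓ,+}, h_{ℓ,+} satisfy the '+'-half of the Ablowitz–Ladik recursion for (α, β) with constant c₀,₊, and set γ := 1 − αβ. Then there exists a constant c₁,₊ ∈ ℂ such that for all n ∈ ℤ: g_{1,+} = −c₀,₊ α⁺β + c₁,₊/2, f_{1,+} = c₀,₊(−γ⁺α⁺⁺ + (α⁺)²β) − c₁,₊ α⁺, and h_{1,+} = c₀,₊(γβ⁻ − α⁺β²) + c₁,₊ β. -/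
namespace ALRecPlus

variable {α β : ℤ → ℂ} {c0p : ℂ} {f g h : ℕ → ℤ → ℂ}

theorem periodic_g_one_add (hrec : ALRecPlus α β c0p f g h) :
    Function.Periodic (fun n => g 1 n + c0p * α (n + 1) * β n) 1 := by
  intro n
  have step := hrec.g_step 0 (n + 1)
  rw [hrec.h0, hrec.f0, add_sub_cancel_right] at step
  linear_combination step

theorem exists_g_one_eq (hrec : ALRecPlus α β c0p f g h) :
    ∃ c1p : ℂ, ∀ n : ℤ, g 1 n = -(c0p * α (n + 1) * β n) + c1p / 2 := by
  refine ⟨2 * (g 1 0 + c0p * α 1 * β 0), fun n => ?_⟩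
  have hconst := hrec.periodic_g_one_add.int_mul_eq n
  rw [mul_one, zero_add] at hconst
  linear_combination hconst

variable {c1p : ℂ}

theorem f_one_eq (hrec : ALRecPlus α β c0p f g h)
    (hg : ∀ n : ℤ, g 1 n = -(c0p * α (n + 1) * β n) + c1p / 2) (n : ℤ) :
    f 1 n = c0p * (-((1 - α (n + 1) * β (n + 1)) * α (n + 2)) + α (n + 1) ^ 2 * β n)
      - c1p * α (n + 1) := by
  have hf := hrec.f_step 0 (n + 1)
  rw [add_sub_cancel_right] at hf
  rw [hf, hrec.f0, hg, hg, add_assoc n 1 1, one_add_one_eq_two]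
  ring

theorem h_one_eq (hrec : ALRecPlus α β c0p f g h)
    (hg : ∀ n : ℤ, g 1 n = -(c0p * α (n + 1) * β n) + c1p / 2) (n : ℤ) :
    h 1 n = c0p * ((1 - α n * β n) * β (n - 1) - α (n + 1) * β n ^ 2) + c1p * β n := by
  rw [hrec.h_step, hrec.h0, hg, hg, sub_add_cancel]
  ring

end ALRecPlus

/-- There is a summation constant `c₁,₊` such that
`g_{1,+} = −c₀,₊ α⁺β + c₁,₊/2`, `f_{1,+} = c₀,₊(−γ⁺α⁺⁺ + (α⁺)²β) − c₁,₊ α⁺`, and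
`h_{1,+} = c₀,₊(γβ⁻ − α⁺β²) + c₁,₊ β`, where `γ = 1 − αβ`. -/
theorem first_order_coefficients (α β : ℤ → ℂ) (c0p : ℂ) (f g h : ℕ → ℤ → ℂ)
    (hrec : ALRecPlus α β c0p f g h) :
    ∃ c1p : ℂ, ∀ n : ℤ,
      g 1 n = -(c0p * α (n + 1) * β n) + c1p / 2
      ∧ f 1 n = c0p * (-((1 - α (n + 1) * β (n + 1)) * α (n + 2))
            + α (n + 1) ^ 2 * β n) - c1p * α (n + 1)
      ∧ h 1 n = c0p * ((1 - α n * β n) * β (n - 1) - α (n + 1) * β n ^ 2)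
            + c1p * β n := by
  obtain ⟨c1p, hg⟩ := hrec.exists_g_one_eq
  exact ⟨c1p, fun n => ⟨hg n, hrec.f_one_eq hg n, hrec.h_one_eq hg n⟩⟩
end

section
/- Suppose the families f_{ℓ,±}, g_{ℓ,±}, h_{ℓ,±} satisfy the Ablowitz–Ladik recursion for (α, β) with constants c₀,₊, c₀,₋, and let c ∈ ℂ∖{0}. Then the families f'_{ℓ,±} := c·f_{ℓ,±}, g'_{ℓ,±} := g_{ℓ,±}, h'_{ℓ,±} := c⁻¹·h_{ℓ,±} satisfy the Ablowitz–Ladik recursion for the scaled pair (cα, c⁻¹β) with the same constants c₀,₊, c₀,₋. Consequently, for any p = (p₋, p₊) ∈ ℕ₀²: (i) if (α, β) satisfies −α(g_{p₊,+} + g_{p₋,−}⁻) + f_{p₊−1,+} − f_{p₋−1,−}⁻ = 0 and β(g_{p₊,+}⁻ + g_{p₋,−}) + h_{p₊−1,+}⁻ − h_{p₋−1,−} = 0 on ℤ, then (cα, c⁻¹β) satisfies the same equations with the primed families; and (ii) the quantity G_p² − F_pH_p is unchanged under this transformation, i.e., G'_p(z,n)² − F'_p(z,n)H'_p(z,n)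 = G_p(z,n)² − F_p(z,n)H_p(z,n) for all z ∈ ℂ∖{0}, n ∈ ℤ. -/
/-- Invariance of the Ablowitz–Ladik hierarchy under the scaling transformation
`α ↦ cα`, `β ↦ c⁻¹β`: the scaled families `(cf_{·,±}, g_{·,±}, c⁻¹h_{·,±})` satisfy
the recursion for `(cα, c⁻¹β)`; stationary Ablowitz–Ladik solutions are transported
to stationary solutions; and `G_p² − F_p H_p` is unchanged. -/
theorem scaling_invariance (α β : ℤ → ℂ) (c0p c0m : ℂ)
    (fp gp hp fm gm hm : ℕ → ℤ → ℂ)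
    (h : ALRecursion α β c0p c0m fp gp hp fm gm hm)
    (c : ℂ) (hc : c ≠ 0) :
    ALRecursion (fun n => c * α n) (fun n => c⁻¹ * β n) c0p c0m
      (fun ℓ n => c * fp ℓ n) gp (fun ℓ n => c⁻¹ * hp ℓ n)
      (fun ℓ n => c * fm ℓ n) gm (fun ℓ n => c⁻¹ * hm ℓ n)
    ∧ (∀ pm pp : ℕ,
        (∀ n : ℤ,
          -(α n) * (gp pp n + gm pm (n - 1))
              + fPrev fp pp n - fPrev fm pm (n - 1) = 0
          ∧ β n * (gp pp (n - 1) + gm pm n)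
              + fPrev hp pp (n - 1) - fPrev hm pm n = 0) →
        (∀ n : ℤ,
          -(c * α n) * (gp pp n + gm pm (n - 1))
              + fPrev (fun ℓ n => c * fp ℓ n) pp n
              - fPrev (fun ℓ n => c * fm ℓ n) pm (n - 1) = 0
          ∧ (c⁻¹ * β n) * (gp pp (n - 1) + gm pm n)
              + fPrev (fun ℓ n => c⁻¹ * hp ℓ n) pp (n - 1)
              - fPrev (fun ℓ n => c⁻¹ * hm ℓ n) pm n = 0))
    ∧ (∀ (pm pp : ℕ) (z : ℂ), z ≠ 0 → ∀ n : ℤ,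
        GLaurent gm gp pm pp z n ^ 2
            - FLaurent (fun ℓ n => c * fm ℓ n) (fun ℓ n => c * fp ℓ n) pm pp z n
              * HLaurent (fun ℓ n => c⁻¹ * hm ℓ n) (fun ℓ n => c⁻¹ * hp ℓ n) pm pp z n
          = GLaurent gm gp pm pp z n ^ 2
            - FLaurent fm fp pm pp z n * HLaurent hm hp pm pp z n) := by
  obtain ⟨hp', hm'⟩ := h
  refine ⟨⟨⟨hp'.g0, ?_, ?_, ?_, ?_, ?_⟩, ⟨hm'.g0, ?_, ?_, ?_, ?_, ?_⟩⟩, ?_, ?_⟩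
  · intro n; rw [hp'.f0 n]; ring
  · intro n; rw [hp'.h0 n]; ring
  · intro l m; rw [hp'.g_step l m]; field_simp
  · intro n m; rw [hp'.f_step n m]; ring
  · intro n m; rw [hp'.h_step n m]; ring
  · intro n; rw [hm'.f0 n]; ring
  · intro n; rw [hm'.h0 n]; ring
  · intro l m; rw [hm'.g_step l m]; field_simp
  · intro n m; rw [hm'.f_step n m]; ring
  · intro n m; rw [hm'.h_step n m]; ring
  · intro pm pp hst n
    obtain ⟨h1, h2⟩ := hst n
    have ep : ∀ F : ℕ → ℤ → ℂ, ∀ d m, fPrev (fun ℓ n => d * F ℓ n) m = fun n => d * fPrev F m n := by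
      intro F d m; funext n; unfold fPrev; split <;> simp
    constructor
    · have := congrArg (c * ·) h1
      simp only [ep] at *
      simpa using by linear_combination c * h1
    · simp only [ep] at *
      linear_combination c⁻¹ * h2
  · intro pm pp z hz n
    have hF : FLaurent (fun ℓ n => c * fm ℓ n) (fun ℓ n => c * fp ℓ n) pm pp z n
        = c * FLaurent fm fp pm pp z n := by
      unfold FLaurent; rw [mul_add, Finset.mul_sum, Finset.mul_sum]
      congr 1 <;> exact Finset.sum_congr rfl (fun i _ => by ring)
    have hH : HLaurent (fun ℓ n => c⁻¹ * hm ℓ n) (fun ℓ n => c⁻¹ * hp ℓ n) pm pp z n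
        = c⁻¹ * HLaurent hm hp pm pp z n := by
      unfold HLaurent; rw [mul_add, Finset.mul_sum, Finset.mul_sum]
      congr 1 <;> exact Finset.sum_congr rfl (fun i _ => by ring)
    rw [hF, hH]
    field_simp
end

section
/- Let F, G, H, F̃, G̃, H̃, K̃ : ℝ → ℂ be differentiable functions satisfying, for all t ∈ ℝ: F' = −2iG F̃ + i(G̃ + K̃)F, G' = i(F H̃ − H F̃), H' = 2iG H̃ − i(G̃ + K̃)H. Then: (i) the function G² − FH is constant on ℝ; (ii) if moreover F(t) ≠ 0 for all t in an open interval I ⊆ ℝ and w ∈ ℂ satisfies w² = G(t₀)² − F(t₀)H(t₀) for some t₀ ∈ ℝ, then the function φ := (w + G)/F satisfies the Riccati-type differential equation φ' = i F̃ φ² − i(G̃ + K̃)φ + i H̃ on I. -/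
/-! `G² − FH` is a first integral: in `2GG' − F'H − FH'` the terms cancel in pairs. Hence
`w² = G² − FH` holds at every `t`, and the quotient rule gives
`φ' = iH̃ − i(G̃ + K̃)φ + iF̃ (2G(w + G) − FH)/F²`, where `2G(w + G) − FH = (w + G)²`. -/

section ZeroCurvature

variable {𝕜 𝕜' : Type*} [NontriviallyNormedField 𝕜] [NontriviallyNormedField 𝕜']
  [NormedAlgebra 𝕜 𝕜'] {F G H : 𝕜 → 𝕜'} {x : 𝕜} {c f h k : 𝕜'}

theorem hasDerivAt_sq_sub_mul_of_zeroCurvature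
    (hF : HasDerivAt F (-2 * c * G x * f + c * k * F x) x)
    (hG : HasDerivAt G (c * (F x * h - H x * f)) x)
    (hH : HasDerivAt H (2 * c * G x * h - c * k * H x) x) :
    HasDerivAt (fun s => G s ^ 2 - F s * H s) 0 x := by
  refine ((hG.pow 2).sub (hF.mul hH)).congr_deriv ?_
  ring

theorem hasDerivAt_div_riccati_of_zeroCurvature (w : 𝕜')
    (hF : HasDerivAt F (-2 * c * G x * f + c * k * F x) x)
    (hG : HasDerivAt G (c * (F x * h - H x * f)) x)
    (hFx : F x ≠ 0) (hw : w ^ 2 = G x ^ 2 - F x * H x) :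
    HasDerivAt (fun s => (w + G s) / F s)
      (c * f * ((w + G x) / F x) ^ 2 - c * k * ((w + G x) / F x) + c * h) x := by
  refine ((hG.const_add w).div hF hFx).congr_deriv ?_
  field_simp
  linear_combination (-c * f) * hw

end ZeroCurvature

theorem sq_sub_mul_eq_of_zeroCurvature {𝕜 𝕜' : Type*} [RCLike 𝕜] [NontriviallyNormedField 𝕜']
    [NormedAlgebra 𝕜 𝕜'] {F G H f h k : 𝕜 → 𝕜'} {c : 𝕜'}
    (hF : ∀ x, HasDerivAt F (-2 * c * G x * f x + c * k x * F x) x)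
    (hG : ∀ x, HasDerivAt G (c * (F x * h x - H x * f x)) x)
    (hH : ∀ x, HasDerivAt H (2 * c * G x * h x - c * k x * H x) x) (x y : 𝕜) :
    G x ^ 2 - F x * H x = G y ^ 2 - F y * H y :=
  have hQ x := hasDerivAt_sq_sub_mul_of_zeroCurvature (hF x) (hG x) (hH x)
  is_const_of_deriv_eq_zero (fun x => (hQ x).differentiableAt) (fun x => (hQ x).deriv) x y

theorem time_dependent_FGH_general (F G H Ft Gt Ht Kt : ℝ → ℂ)
    (hF : ∀ t : ℝ, HasDerivAt F
      (-2 * Complex.I * G t * Ft t + Complex.I * (Gt t + Kt t) * F t) t)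
    (hG : ∀ t : ℝ, HasDerivAt G (Complex.I * (F t * Ht t - H t * Ft t)) t)
    (hH : ∀ t : ℝ, HasDerivAt H
      (2 * Complex.I * G t * Ht t - Complex.I * (Gt t + Kt t) * H t) t) :
    (∀ t s : ℝ, G t ^ 2 - F t * H t = G s ^ 2 - F s * H s)
    ∧ ∀ a b : ℝ, (∀ t ∈ Set.Ioo a b, F t ≠ 0) →
        ∀ (w : ℂ) (t₀ : ℝ), w ^ 2 = G t₀ ^ 2 - F t₀ * H t₀ →
          ∀ t ∈ Set.Ioo a b,
            HasDerivAt (fun s => (w + G s) / F s)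
              (Complex.I * Ft t * ((w + G t) / F t) ^ 2
                - Complex.I * (Gt t + Kt t) * ((w + G t) / F t)
                + Complex.I * Ht t) t := by
  have hconst := sq_sub_mul_eq_of_zeroCurvature hF hG hH
  exact ⟨hconst, fun a b hFne w t₀ hw t ht =>
    hasDerivAt_div_riccati_of_zeroCurvature w (hF t) (hG t) (hFne t ht) (hw.trans (hconst t₀ t))⟩

/-- Given the time-dependent zero-curvature identities
`F' = −2iG F̃ + i(G̃ + K̃)F`, `G' = i(F H̃ − H F̃)`, `H' = 2iG H̃ − i(G̃ + K̃)H`: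
(i) `G² − FH` is constant in `t`; (ii) if `F` does not vanish on an open interval
`(a,b)` and `w² = G(t₀)² − F(t₀)H(t₀)` for some `t₀`, then `φ = (w + G)/F` satisfies
the Riccati-type equation `φ' = iF̃φ² − i(G̃ + K̃)φ + iH̃` on `(a,b)`. -/
theorem time_dependent_FGH (F G H Ft Gt Ht Kt : ℝ → ℂ)
    (hFt : Differentiable ℝ Ft) (hGt : Differentiable ℝ Gt)
    (hHt : Differentiable ℝ Ht) (hKt : Differentiable ℝ Kt)
    (hF : ∀ t : ℝ, HasDerivAt F
      (-2 * Complex.I * G t * Ft t + Complex.I * (Gt t + Kt t) * F t) t)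
    (hG : ∀ t : ℝ, HasDerivAt G (Complex.I * (F t * Ht t - H t * Ft t)) t)
    (hH : ∀ t : ℝ, HasDerivAt H
      (2 * Complex.I * G t * Ht t - Complex.I * (Gt t + Kt t) * H t) t) :
    (∀ t s : ℝ, G t ^ 2 - F t * H t = G s ^ 2 - F s * H s)
    ∧ ∀ a b : ℝ, (∀ t ∈ Set.Ioo a b, F t ≠ 0) →
        ∀ (w : ℂ) (t₀ : ℝ), w ^ 2 = G t₀ ^ 2 - F t₀ * H t₀ →
          ∀ t ∈ Set.Ioo a b,
            HasDerivAt (fun s => (w + G s) / F s)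
              (Complex.I * Ft t * ((w + G t) / F t) ^ 2
                - Complex.I * (Gt t + Kt t) * ((w + G t) / F t)
                + Complex.I * Ht t) t :=
  time_dependent_FGH_general F G H Ft Gt Ht Kt hF hG hH
end

section
/- Let p₋ ∈ ℕ₀, p ∈ ℕ, c₀,₊ ∈ ℂ∖{0}, let I ⊆ ℝ be an open interval, and let μ₁, …, μ_p : I → ℂ be continuously differentiable functions that are pairwise distinct and nonvanishing at every t ∈ I. Let a : I → ℂ be differentiable and nonvanishing, and define F(z,t) := −c₀,₊ a(t) z^{−p₋} Π_{j=1}^{p}(z − μ_j(t)) for z ∈ ℂ∖{0}, t ∈ I. Suppose G, F̃, G̃, K̃ : (ℂ∖{0}) × I → ℂ are such that ∂ₜF(z,t) = −2iG(z,t)F̃(z,t) + i(G̃(z,t) + K̃(z,t))F(z,t) for all z ∈ ℂ∖{0} and t ∈ I. Then the zeros μ_j satisfy the Dubrovin-type equations μ_j'(t) = −(2i/c₀,₊)·F̃(μ_j(t),t)·μ_j(t)^{p₋}·G(μ_j(t),t)·a(t)^{−1}·Π_{k≠j}(μ_j(t) − μ_k(t))^{−1} for j = 1, …, p and all t ∈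 I. -/
open Finset

section ProdDeriv

variable {𝕜 𝔸 ι : Type*} [NontriviallyNormedField 𝕜] [NormedCommRing 𝔸] [NormedAlgebra 𝕜 𝔸]
  {x : 𝕜}

theorem HasDerivAt.finsetProd_of_eq_zero [DecidableEq ι] {u : Finset ι} {f : ι → 𝕜 → 𝔸}
    {f' : ι → 𝔸} (hf : ∀ i ∈ u, HasDerivAt (f i) (f' i) x) {j : ι} (hj : j ∈ u)
    (hfj : f j x = 0) :
    HasDerivAt (fun y => ∏ i ∈ u, f i y) (f' j * ∏ i ∈ u.erase j, f i x) x := by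
  refine (HasDerivAt.fun_finsetProd hf).congr_deriv ?_
  rw [sum_eq_single_of_mem j hj fun k _ hkj => ?_, smul_eq_mul, mul_comm]
  rw [prod_eq_zero (mem_erase.mpr ⟨Ne.symm hkj, hj⟩) hfj, zero_smul]

theorem HasDerivAt.mul_of_right_eq_zero {c d : 𝕜 → 𝔸} {d' : 𝔸}
    (hc : DifferentiableAt 𝕜 c x) (hd : HasDerivAt d d' x) (hdx : d x = 0) :
    HasDerivAt (fun y => c y * d y) (c x * d') x := by
  simpa [hdx] using hc.hasDerivAt.fun_mul hd

end ProdDeriv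

theorem dubrovin_equations_general (pm : ℕ) (p : ℕ)
    (c0p : ℂ) (hc0p : c0p ≠ 0) (a b : ℝ)
    (μ μ' : Fin p → ℝ → ℂ)
    (hμ : ∀ (j : Fin p), ∀ t ∈ Set.Ioo a b, HasDerivAt (μ j) (μ' j t) t)
    (hdistinct : ∀ t ∈ Set.Ioo a b, ∀ j k : Fin p, j ≠ k → μ j t ≠ μ k t)
    (hnonzero : ∀ t ∈ Set.Ioo a b, ∀ j : Fin p, μ j t ≠ 0)
    (A : ℝ → ℂ)
    (hA : ∀ t ∈ Set.Ioo a b, DifferentiableAt ℝ A t)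
    (hAne : ∀ t ∈ Set.Ioo a b, A t ≠ 0)
    (G Ft Gt Kt : ℂ → ℝ → ℂ)
    (hF : ∀ z : ℂ, z ≠ 0 → ∀ t ∈ Set.Ioo a b,
      HasDerivAt (fun s => -c0p * A s * z ^ (-(pm : ℤ)) * ∏ j, (z - μ j s))
        (-2 * Complex.I * G z t * Ft z t
          + Complex.I * (Gt z t + Kt z t)
            * (-c0p * A t * z ^ (-(pm : ℤ)) * ∏ j, (z - μ j t))) t) :
    ∀ (j : Fin p), ∀ t ∈ Set.Ioo a b,
      μ' j t = -(2 * Complex.I / c0p) * Ft (μ j t) t * μ j t ^ pm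
        * G (μ j t) t * (A t)⁻¹
        * (∏ k ∈ Finset.univ.erase j, (μ j t - μ k t))⁻¹ := by
  intro j t ht
  set z := μ j t
  have hz : z ≠ 0 := hnonzero t ht j
  have hPt : ∏ k, (z - μ k t) = 0 := prod_eq_zero (mem_univ j) (sub_self z)
  have hP : HasDerivAt (fun s => ∏ k, (z - μ k s)) (-μ' j t * ∏ k ∈ univ.erase j, (z - μ k t)) t :=
    .finsetProd_of_eq_zero (fun k _ => (hμ k t ht).const_sub z) (mem_univ j) (sub_self z)
  have hc : DifferentiableAt ℝ (fun s => -c0p * A s * z ^ (-(pm : ℤ))) t :=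
    ((hA t ht).const_mul _).mul_const _
  -- Evaluating the evolution equation at the zero `z = μ_j(t)` kills the `(G̃ + K̃) F` term.
  have key := (hF z hz t ht).unique (hP.mul_of_right_eq_zero hc hPt)
  simp only [hPt, mul_zero, add_zero, zpow_neg, zpow_natCast] at key
  have hprod : ∏ k ∈ univ.erase j, (z - μ k t) ≠ 0 :=
    prod_ne_zero_iff.mpr fun k hk => sub_ne_zero.mpr (hdistinct t ht j k (ne_of_mem_erase hk).symm)
  have hzpm : z ^ pm ≠ 0 := pow_ne_zero _ hz
  have hAt := hAne t ht
  field_simp at key ⊢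
  linear_combination -key

/-- Dubrovin-type equations for the motion of the zeros `μ_j` of `z^{p₋}F(z,·)`,
where `F(z,t) = −c₀,₊ a(t) z^{−p₋} Π_{j=1}^{p}(z − μ_j(t))` evolves according to
`∂ₜF = −2iG F̃ + i(G̃ + K̃)F`:
`μ_j' = −(2i/c₀,₊) F̃(μ_j) μ_j^{p₋} G(μ_j) a⁻¹ Π_{k≠j}(μ_j − μ_k)⁻¹`. -/
theorem dubrovin_equations (pm : ℕ) (p : ℕ) (hp : 1 ≤ p)
    (c0p : ℂ) (hc0p : c0p ≠ 0) (a b : ℝ)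
    (μ μ' : Fin p → ℝ → ℂ)
    (hμ : ∀ (j : Fin p), ∀ t ∈ Set.Ioo a b, HasDerivAt (μ j) (μ' j t) t)
    (hμcont : ∀ j : Fin p, ContinuousOn (μ' j) (Set.Ioo a b))
    (hdistinct : ∀ t ∈ Set.Ioo a b, ∀ j k : Fin p, j ≠ k → μ j t ≠ μ k t)
    (hnonzero : ∀ t ∈ Set.Ioo a b, ∀ j : Fin p, μ j t ≠ 0)
    (A : ℝ → ℂ)
    (hA : ∀ t ∈ Set.Ioo a b, DifferentiableAt ℝ A t)
    (hAne : ∀ t ∈ Set.Ioo a b, A t ≠ 0)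
    (G Ft Gt Kt : ℂ → ℝ → ℂ)
    (hF : ∀ z : ℂ, z ≠ 0 → ∀ t ∈ Set.Ioo a b,
      HasDerivAt (fun s => -c0p * A s * z ^ (-(pm : ℤ)) * ∏ j, (z - μ j s))
        (-2 * Complex.I * G z t * Ft z t
          + Complex.I * (Gt z t + Kt z t)
            * (-c0p * A t * z ^ (-(pm : ℤ)) * ∏ j, (z - μ j t))) t) :
    ∀ (j : Fin p), ∀ t ∈ Set.Ioo a b,
      μ' j t = -(2 * Complex.I / c0p) * Ft (μ j t) t * μ j t ^ pm
        * G (μ j t) t * (A t)⁻¹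
        * (∏ k ∈ Finset.univ.erase j, (μ j t - μ k t))⁻¹ :=
  dubrovin_equations_general pm p c0p hc0p a b μ μ' hμ hdistinct hnonzero A hA hAne G Ft Gt Kt hF
end
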